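/- arXiv:1705.01269 — 6 statements merged into one kernel-verified Lean document; each statement's English description precedes it below -/
import Mathlib

section
/- For integers r ≥ 1 and s ≥ 2, ζ(r̄, s) = -(1/(Γ(r)Γ(s))) ∫₀^∞ ∫₀^∞ t^{s-1} u^{r-1} / ((e^t - 1)(e^{t+u} + 1)) du dt. -/
open Filter Finset Real

/-- `zeta k` : the Riemann zeta value `ζ(k) = Σ_{m≥1} 1/m^k`, with the convention `ζ(0) = -1/2`. -/
noncomputable def zeta (k : ℕ) : ℝ :=
  if k = 0 then -1/2 else limUnder atTop (fun N => ∑ m ∈ Finset.range N, 1/((m+1 : ℝ))^k)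

/-- `zetaA k` : the alternating zeta value `ζ(k̄) = Σ_{m≥1} (-1)^m/m^k`,
with the convention `ζ(0̄) = -1/2`. -/
noncomputable def zetaA (k : ℕ) : ℝ :=
  if k = 0 then -1/2 else
    limUnder atTop (fun N => ∑ m ∈ Finset.range N, (-1 : ℝ)^(m+1)/((m+1 : ℝ))^k)

/-- `dzeta r s = ζ(r,s) = Σ_{m≥2} (1/m^s) Σ_{j=1}^{m-1} 1/j^r`. -/
noncomputable def dzeta (r s : ℕ) : ℝ :=
  limUnder atTop (fun N => ∑ m ∈ Finset.range N,
    (1/((m+2 : ℝ))^s) * ∑ j ∈ Finset.range (m+1), 1/((j+1 : ℝ))^r)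

/-- `dzetaA1 r s = ζ(r̄,s) = Σ_{m≥2} (1/m^s) Σ_{j=1}^{m-1} (-1)^j/j^r`. -/
noncomputable def dzetaA1 (r s : ℕ) : ℝ :=
  limUnder atTop (fun N => ∑ m ∈ Finset.range N,
    (1/((m+2 : ℝ))^s) * ∑ j ∈ Finset.range (m+1), (-1 : ℝ)^(j+1)/((j+1 : ℝ))^r)

/-- `dzetaA2 r s = ζ(r,s̄) = Σ_{m≥2} ((-1)^m/m^s) Σ_{j=1}^{m-1} 1/j^r`. -/
noncomputable def dzetaA2 (r s : ℕ) : ℝ :=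
  limUnder atTop (fun N => ∑ m ∈ Finset.range N,
    ((-1 : ℝ)^(m+2)/((m+2 : ℝ))^s) * ∑ j ∈ Finset.range (m+1), 1/((j+1 : ℝ))^r)

/-- `dzetaA3 r s = ζ(r̄,s̄) = Σ_{m≥2} ((-1)^m/m^s) Σ_{j=1}^{m-1} (-1)^j/j^r`. -/
noncomputable def dzetaA3 (r s : ℕ) : ℝ :=
  limUnder atTop (fun N => ∑ m ∈ Finset.range N,
    ((-1 : ℝ)^(m+2)/((m+2 : ℝ))^s) * ∑ j ∈ Finset.range (m+1), (-1 : ℝ)^(j+1)/((j+1 : ℝ))^r)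

/-!
Expanding `1/(e^t - 1) = Σ_{i≥1} e^{-it}` and `1/(e^{t+u} + 1) = Σ_{j≥1} (-1)^(j-1) e^{-j(t+u)}`
and integrating termwise with `∫₀^∞ x^(n-1) e^{-ax} dx = Γ(n)/a^n`, first in `u` and then in `t`,
turns the double integral into `Γ(r)Γ(s) Σ_{i,j≥1} (-1)^(j-1) / (j^r (i+j)^s)`. Summing along the
antidiagonals `i + j = m` identifies this double series with `-Γ(r)Γ(s) ζ(r̄, s)`. Every
interchange is justified by absolute convergence, which reduces to `Σ_{i,j} 1/(j (i+j)^2) < ∞`.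
-/

open MeasureTheory Set
open scoped Nat

theorem integrableOn_pow_mul_exp_neg_mul (n : ℕ) {a : ℝ} (ha : 0 < a) :
    IntegrableOn (fun t : ℝ => t ^ n * exp (-(a * t))) (Ioi 0) := by
  refine (integrableOn_rpow_mul_exp_neg_mul_rpow (s := n) (by linarith [n.cast_nonneg (α := ℝ)])
    zero_lt_one ha).congr_fun (fun t _ => ?_) measurableSet_Ioi
  simp only [rpow_one, rpow_natCast, neg_mul]

theorem integral_Ioi_pow_mul_exp_neg_mul (n : ℕ) {a : ℝ} (ha : 0 < a) :
    ∫ t in Ioi (0 : ℝ), t ^ n * exp (-(a * t)) = n ! / a ^ (n + 1) := by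
  have h := integral_rpow_mul_exp_neg_mul_Ioi (a := n + 1) (by positivity) ha
  rw [add_sub_cancel_right, Gamma_nat_eq_factorial] at h
  simp only [rpow_natCast] at h
  rw [h, ← Nat.cast_succ, rpow_natCast, one_div_pow, one_div_mul_eq_div]

theorem hasSum_pow_mul_exp_neg_succ_mul {c t : ℝ} (hc : |c| ≤ 1) (ht : 0 < t) :
    HasSum (fun n : ℕ => c ^ n * exp (-((n + 1) * t))) (1 / (exp t - c)) := by
  have hq : |c * exp (-t)| < 1 := by
    rw [abs_mul, abs_of_pos (exp_pos _)]
    exact (mul_le_of_le_one_left (exp_pos _).le hc).trans_lt (exp_lt_one_iff.2 (by linarith))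
  have hne : exp t - c ≠ 0 := by
    have := le_of_abs_le hc; have := add_one_lt_exp ht.ne'; linarith
  have hterm (n : ℕ) : c ^ n * exp (-((n + 1) * t)) = (c * exp (-t)) ^ n * exp (-t) := by
    rw [mul_pow, ← exp_nat_mul, mul_assoc, ← exp_add]
    ring_nf
  have hval : 1 / (exp t - c) = (1 - c * exp (-t))⁻¹ * exp (-t) := by
    rw [exp_neg]
    field_simp
  simpa only [hterm, hval] using (hasSum_geometric_of_abs_lt_one hq).mul_right (exp (-t))

theorem summable_exp_neg_succ_mul_div_pow (n : ℕ) {t : ℝ} (ht : 0 < t) :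
    Summable fun j : ℕ => exp (-((j + 1) * t)) / ((j : ℝ) + 1) ^ n := by
  refine Summable.of_nonneg_of_le (fun j => by positivity) (fun j => ?_)
    (hasSum_pow_mul_exp_neg_succ_mul (c := 1) (by simp) ht).summable
  rw [one_pow, one_mul]
  exact div_le_self (exp_pos _).le (one_le_pow₀ (by linarith [j.cast_nonneg (α := ℝ)]))

theorem sum_range_one_div_add_add_one_sq_le {a : ℝ} (ha : 0 < a) (N : ℕ) :
    ∑ i ∈ range N, 1 / ((i : ℝ) + a + 1) ^ 2 ≤ 1 / a - 1 / (N + a) := by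
  induction N with
  | zero => simp
  | succ N ih =>
    have hstep : 1 / ((N : ℝ) + a + 1) ^ 2 ≤ 1 / (N + a) - 1 / (N + a + 1) := by
      rw [div_sub_div _ _ (by positivity) (by positivity), div_le_div_iff₀ (by positivity)
        (by positivity)]
      nlinarith
    rw [sum_range_succ, Nat.cast_succ, show (N : ℝ) + 1 + a = N + a + 1 by ring]
    linarith

theorem summable_one_div_add_add_one_sq {a : ℝ} (ha : 0 < a) :
    Summable fun i : ℕ => 1 / ((i : ℝ) + a + 1) ^ 2 :=
  summable_of_sum_range_le (c := 1 / a) (fun i => by positivity) fun N =>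
    (sum_range_one_div_add_add_one_sq_le ha N).trans (by simp; positivity)

theorem tsum_one_div_add_add_one_sq_le {a : ℝ} (ha : 0 < a) :
    ∑' i : ℕ, 1 / ((i : ℝ) + a + 1) ^ 2 ≤ 1 / a :=
  Real.tsum_le_of_sum_range_le (fun i => by positivity) fun N =>
    (sum_range_one_div_add_add_one_sq_le ha N).trans (by simp; positivity)

theorem summable_one_div_succ_mul_add_sq :
    Summable fun p : ℕ × ℕ => 1 / (((p.1 : ℝ) + 1) * (((p.1 + p.2 : ℕ) : ℝ) + 2) ^ 2) := by
  have hrow (j i : ℕ) : 1 / (((j : ℝ) + 1) * (((j + i : ℕ) : ℝ) + 2) ^ 2)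
      = 1 / ((j : ℝ) + 1) * (1 / ((i : ℝ) + (j + 1) + 1) ^ 2) := by
    rw [one_div_mul_one_div]; push_cast; ring
  rw [summable_prod_of_nonneg fun p => by positivity]
  simp only [hrow, tsum_mul_left]
  refine ⟨fun j => (summable_one_div_add_add_one_sq (by positivity)).mul_left _, ?_⟩
  refine Summable.of_nonneg_of_le (fun j => by positivity) (fun j => ?_)
    ((summable_nat_add_iff 1).mpr (summable_one_div_nat_pow.mpr one_lt_two))
  calc 1 / ((j : ℝ) + 1) * ∑' i : ℕ, 1 / ((i : ℝ) + (j + 1) + 1) ^ 2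
      ≤ 1 / ((j : ℝ) + 1) * (1 / ((j : ℝ) + 1)) := by
        gcongr; exact tsum_one_div_add_add_one_sq_le (by positivity)
    _ = 1 / ((j + 1 : ℕ) : ℝ) ^ 2 := by rw [one_div_mul_one_div]; push_cast; ring

theorem Summable.hasSum_sum_antidiagonal {α A : Type*} [AddCommMonoid α] [TopologicalSpace α]
    [ContinuousAdd α] [RegularSpace α] [AddCommMonoid A] [HasAntidiagonal A] {f : A × A → α}
    (hf : Summable f) : HasSum (fun n => ∑ p ∈ antidiagonal n, f p) (∑' p, f p) :=
  (HasAntidiagonal.sigmaAntidiagonalEquivProd.hasSum_iff.mpr hf.hasSum).sigma fun n =>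
    (antidiagonal n).hasSum f

/-- The pair `(j, i)` stands for the term `(-1)^(j+1) / ((j+1)^r m^s)` of `ζ(r̄, s)` with
outer index `m = j + i + 2`. -/
noncomputable def dzetaA1Summand (r s : ℕ) (p : ℕ × ℕ) : ℝ :=
  (-1) ^ (p.1 + 1) / (((p.1 : ℝ) + 1) ^ r * (((p.1 + p.2 : ℕ) : ℝ) + 2) ^ s)

theorem abs_dzetaA1Summand (r s : ℕ) (p : ℕ × ℕ) :
    |dzetaA1Summand r s p| = 1 / (((p.1 : ℝ) + 1) ^ r * (((p.1 + p.2 : ℕ) : ℝ) + 2) ^ s) := by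
  rw [dzetaA1Summand, abs_div, abs_pow, abs_neg, abs_one, one_pow, abs_of_pos (by positivity)]

theorem summable_abs_dzetaA1Summand {r s : ℕ} (hr : 1 ≤ r) (hs : 2 ≤ s) :
    Summable fun p => |dzetaA1Summand r s p| := by
  refine summable_one_div_succ_mul_add_sq.of_nonneg_of_le (fun p => abs_nonneg _) fun p => ?_
  rw [abs_dzetaA1Summand]
  have h1 : (1 : ℝ) ≤ (p.1 : ℝ) + 1 := by linarith [p.1.cast_nonneg (α := ℝ)]
  have h2 : (1 : ℝ) ≤ ((p.1 + p.2 : ℕ) : ℝ) + 2 := by linarith [(p.1 + p.2).cast_nonneg (α := ℝ)]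
  gcongr
  exact le_self_pow₀ h1 (by omega)

theorem dzetaA1_eq_tsum {r s : ℕ} (hr : 1 ≤ r) (hs : 2 ≤ s) :
    dzetaA1 r s = ∑' p, dzetaA1Summand r s p := by
  have hterm (m : ℕ) :
      1 / ((m + 2 : ℝ)) ^ s * ∑ j ∈ range (m + 1), (-1 : ℝ) ^ (j + 1) / ((j + 1 : ℝ)) ^ r
        = ∑ p ∈ antidiagonal m, dzetaA1Summand r s p := by
    rw [Nat.sum_antidiagonal_eq_sum_range_succ_mk, mul_sum]
    refine sum_congr rfl fun j hj => ?_
    rw [dzetaA1Summand, Nat.add_sub_cancel' (Nat.lt_succ_iff.mp (mem_range.mp hj))]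
    ring
  rw [dzetaA1]
  simp only [hterm]
  exact (summable_abs_dzetaA1Summand hr hs).of_abs.hasSum_sum_antidiagonal.tendsto_sum_nat
    |>.limUnder_eq

theorem hasSum_integral_Ioi_of_hasSum_pow_mul_exp {ι : Type*} [Countable ι] (n : ℕ) {c a : ι → ℝ}
    (ha : ∀ i, 0 < a i) (hc : Summable fun i => |c i| / a i ^ (n + 1)) {f : ℝ → ℝ}
    (hf : ∀ x ∈ Ioi (0 : ℝ), HasSum (fun i => c i * (x ^ n * exp (-(a i * x)))) (f x)) :
    HasSum (fun i => n ! * (c i / a i ^ (n + 1))) (∫ x in Ioi 0, f x) := by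
  have hint (i : ι) :
      Integrable (fun x => c i * (x ^ n * exp (-(a i * x)))) (volume.restrict (Ioi 0)) :=
    (integrableOn_pow_mul_exp_neg_mul n (ha i)).const_mul _
  have hintegral (i : ι) (d : ℝ) :
      ∫ x in Ioi (0 : ℝ), d * (x ^ n * exp (-(a i * x))) = n ! * (d / a i ^ (n + 1)) := by
    rw [integral_const_mul, integral_Ioi_pow_mul_exp_neg_mul n (ha i)]
    ring
  have hnorm (i : ι) : ∫ x in Ioi (0 : ℝ), ‖c i * (x ^ n * exp (-(a i * x)))‖
      = n ! * (|c i| / a i ^ (n + 1)) := by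
    rw [← hintegral]
    refine setIntegral_congr_fun measurableSet_Ioi fun x hx => ?_
    rw [norm_mul, Real.norm_eq_abs, Real.norm_of_nonneg (by have := mem_Ioi.mp hx; positivity)]
  have h := hasSum_integral_of_summable_integral_norm hint
    (by simpa only [hnorm] using hc.mul_left (n ! : ℝ))
  simp only [hintegral] at h
  rwa [integral_congr_ae (ae_restrict_of_forall_mem measurableSet_Ioi
    fun x hx => (hf x hx).tsum_eq)] at h

theorem hasSum_integral_Ioi_pow_div_exp_add_add_one (n : ℕ) {t : ℝ} (ht : 0 < t) :
    HasSum (fun j : ℕ => n ! * ((-1) ^ j * exp (-((j + 1) * t)) / ((j : ℝ) + 1) ^ (n + 1)))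
      (∫ u in Ioi (0 : ℝ), u ^ n / (exp (t + u) + 1)) := by
  refine hasSum_integral_Ioi_of_hasSum_pow_mul_exp n (a := fun j : ℕ => (j : ℝ) + 1)
    (fun j => by positivity) ?_ fun u hu => ?_
  · simpa only [abs_mul, abs_pow, abs_neg, abs_one, one_pow, one_mul, abs_of_pos (exp_pos _)]
      using summable_exp_neg_succ_mul_div_pow (n + 1) ht
  · have h := (hasSum_pow_mul_exp_neg_succ_mul (c := -1) (by simp) (add_pos ht hu)).mul_left
      (u ^ n)
    rw [sub_neg_eq_add, mul_one_div] at h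
    refine h.congr_fun fun j => ?_
    rw [mul_add, neg_add, exp_add]
    ring

theorem hasSum_integral_Ioi_div_exp_sub_one_mul_exp_add_add_one (k n : ℕ) {t : ℝ} (ht : 0 < t) :
    HasSum (fun p : ℕ × ℕ => (-1) ^ p.1 * k ! / ((p.1 : ℝ) + 1) ^ (k + 1) *
        (t ^ n * exp (-((((p.1 + p.2 : ℕ) : ℝ) + 2) * t))))
      (∫ u in Ioi (0 : ℝ), t ^ n * u ^ k / ((exp t - 1) * (exp (t + u) + 1))) := by
  have hinner := hasSum_integral_Ioi_pow_div_exp_add_add_one k ht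
  have hgeom := hasSum_pow_mul_exp_neg_succ_mul (c := 1) (by simp) ht
  have h := (hinner.mul hgeom (summable_mul_of_summable_norm hinner.summable.norm
    hgeom.summable.norm)).mul_left (t ^ n)
  have hval : ∫ u in Ioi (0 : ℝ), t ^ n * u ^ k / ((exp t - 1) * (exp (t + u) + 1))
      = t ^ n * ((∫ u in Ioi (0 : ℝ), u ^ k / (exp (t + u) + 1)) * (1 / (exp t - 1))) := by
    rw [← integral_mul_const, ← integral_const_mul]
    congr 1
    funext u
    rw [mul_comm (exp t - 1), ← div_div]
    ring
  rw [hval]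
  refine h.congr_fun fun p => ?_
  push_cast
  rw [show ((p.1 : ℝ) + p.2 + 2) * t = (p.1 + 1) * t + (p.2 + 1) * t by ring, neg_add, exp_add]
  ring

theorem integral_Ioi_integral_Ioi_eq_neg_tsum (k l : ℕ) :
    ∫ t in Ioi (0 : ℝ), ∫ u in Ioi (0 : ℝ),
        t ^ (l + 1) * u ^ k / ((exp t - 1) * (exp (t + u) + 1))
      = -(k ! * (l + 1)! * ∑' p, dzetaA1Summand (k + 1) (l + 2) p) := by
  have h := hasSum_integral_Ioi_of_hasSum_pow_mul_exp (l + 1)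
    (a := fun p : ℕ × ℕ => ((p.1 + p.2 : ℕ) : ℝ) + 2) (fun p => by positivity) ?_
    fun t ht => hasSum_integral_Ioi_div_exp_sub_one_mul_exp_add_add_one k (l + 1) ht
  · rw [← h.tsum_eq, ← tsum_mul_left, ← tsum_neg]
    refine tsum_congr fun p => ?_
    rw [dzetaA1Summand, ← div_div]
    ring
  · have hsum := summable_abs_dzetaA1Summand (r := k + 1) (s := l + 2) (by omega) (by omega)
    refine (hsum.mul_left (k ! : ℝ)).congr fun p => ?_
    rw [abs_dzetaA1Summand, ← div_div, abs_div, abs_mul, abs_pow, abs_neg, abs_one, one_pow,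
      one_mul, abs_of_pos (by positivity : (0 : ℝ) < k !),
      abs_of_pos (by positivity : (0 : ℝ) < (p.1 + 1) ^ (k + 1))]
    ring

theorem dzetaA1_integral (r s : ℕ) (hr : 1 ≤ r) (hs : 2 ≤ s) :
    dzetaA1 r s = -(1/(Real.Gamma r * Real.Gamma s)) *
      ∫ t in Set.Ioi (0 : ℝ), ∫ u in Set.Ioi (0 : ℝ),
        t^(s-1) * u^(r-1) / ((Real.exp t - 1) * (Real.exp (t + u) + 1)) := by
  obtain ⟨k, rfl⟩ : ∃ k, r = k + 1 := ⟨r - 1, by omega⟩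
  obtain ⟨l, rfl⟩ : ∃ l, s = l + 1 + 1 := ⟨s - 2, by omega⟩
  have hΓ (n : ℕ) : Gamma ((n + 1 : ℕ) : ℝ) = n ! := by rw [Nat.cast_succ, Gamma_nat_eq_factorial]
  rw [dzetaA1_eq_tsum hr hs, hΓ, hΓ, Nat.add_sub_cancel, Nat.add_sub_cancel,
    integral_Ioi_integral_Ioi_eq_neg_tsum]
  field_simp
end

section
/- For integers r ≥ 1, s ≥ 2 with r + s = k, the shuffle relation ζ(r̄)ζ(s) = Σ_{j=1}^{k-1} C(j-1, r-1) ζ(overline{k-j}, j̄) + Σ_{j=1}^{k-1} C(j-1, s-1) ζ(overline{k-j}, j) holds, where C denotes binomial coefficients. -/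
open Filter Finset Real

/-! Write `X = 1/(a+1)`, `Y = 1/(b+1)` and `t = 1/(a+b+2)`. Then `X Y = t (X + Y)`, and iterating
this relation gives the partial fraction decomposition
`X^r Y^s = ∑_{i < k-1} (C(i, r-1) t^(i+1) Y^(k-1-i) + C(i, s-1) t^(i+1) X^(k-1-i))`.
Multiplying by `(-1)^(a+1)` and summing over `a + b = n` turns the `n`-th term of the Cauchy
product of the series for `ζ(r̄)` and `ζ(s)` into a combination of the `n`-th terms of the double
series on the right. The series for `ζ(s)` converges absolutely, so by Mertens' theorem the Cauchy
product sums to `ζ(r̄) ζ(s)`; it remains to see that every double series with a nonzero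
coefficient converges. -/

open Topology

section PartialFractions

variable {R : Type*} [CommSemiring R]

def partialFractionSum (Y t : R) (a b : ℕ) : R :=
  ∑ i ∈ range (a + b + 1), (i.choose a : R) * t ^ (i + 1) * Y ^ (a + b + 1 - i)

theorem partialFractionSum_zero_left (Y t : R) (b : ℕ) :
    partialFractionSum Y t 0 b = ∑ i ∈ range (b + 1), t ^ (i + 1) * Y ^ (b + 1 - i) := by
  simp [partialFractionSum]

theorem partialFractionSum_zero_right (Y t : R) (a : ℕ) :
    partialFractionSum Y t a 0 = t ^ (a + 1) * Y := by
  rw [partialFractionSum, sum_range_succ, sum_eq_zero fun i hi => ?_]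
  · simp
  · simp [Nat.choose_eq_zero_of_lt (mem_range.mp hi)]

theorem partialFractionSum_succ_succ (Y t : R) (a b : ℕ) :
    partialFractionSum Y t (a + 1) (b + 1)
      = t * (partialFractionSum Y t a (b + 1) + partialFractionSum Y t (a + 1) b) := by
  simp only [partialFractionSum]
  rw [sum_range_succ', show a + (b + 1) + 1 = a + 1 + (b + 1) by omega,
    show a + 1 + b + 1 = a + 1 + (b + 1) by omega, mul_add, mul_sum, mul_sum, ← sum_add_distrib]
  simp only [Nat.choose_zero_succ, Nat.cast_zero, zero_mul, add_zero]
  refine sum_congr rfl fun i _ => ?_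
  rw [Nat.choose_succ_succ', Nat.cast_add, Nat.add_sub_add_right]
  ring

theorem pow_succ_mul_eq_partialFractionSum {X Y t : R} (h : X * Y = t * (X + Y)) (a : ℕ) :
    X ^ (a + 1) * Y = t ^ (a + 1) * Y + partialFractionSum X t 0 a := by
  rw [partialFractionSum_zero_left]
  induction a with
  | zero => simp only [h, zero_add, pow_one, range_one, sum_singleton, tsub_zero]; ring
  | succ a ih =>
    have hX : ∀ i ∈ range (a + 1), X * (t ^ (i + 1) * X ^ (a + 1 - i))
        = t ^ (i + 1) * X ^ (a + 1 + 1 - i) := fun i hi => by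
      rw [show a + 1 + 1 - i = a + 1 - i + 1 by have := mem_range.mp hi; omega]
      ring
    calc X ^ (a + 1 + 1) * Y
        = t ^ (a + 1) * (X * Y) + ∑ i ∈ range (a + 1), X * (t ^ (i + 1) * X ^ (a + 1 - i)) := by
          rw [pow_succ', mul_assoc, ih, mul_add, mul_sum]; ring
      _ = _ := by
          rw [h, sum_congr rfl hX, sum_range_succ _ (a + 1), Nat.add_sub_cancel_left, pow_one]
          ring

theorem pow_succ_mul_pow_succ_eq_partialFractionSum {X Y t : R} (h : X * Y = t * (X + Y))
    (a b : ℕ) :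
    X ^ (a + 1) * Y ^ (b + 1) = partialFractionSum Y t a b + partialFractionSum X t b a := by
  induction a generalizing b with
  | zero =>
    have := pow_succ_mul_eq_partialFractionSum (X := Y) (Y := X) (by rw [mul_comm, h, add_comm]) b
    rw [partialFractionSum_zero_right, zero_add, pow_one, mul_comm, this, add_comm]
  | succ a iha =>
    induction b with
    | zero =>
      rw [zero_add, pow_one, pow_succ_mul_eq_partialFractionSum h, partialFractionSum_zero_right]
    | succ b ihb =>
      calc X ^ (a + 1 + 1) * Y ^ (b + 1 + 1) = X * Y * (X ^ (a + 1) * Y ^ (b + 1)) := by ring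
        _ = t * (X ^ (a + 1) * Y ^ (b + 1 + 1) + X ^ (a + 1 + 1) * Y ^ (b + 1)) := by
            rw [h]; ring
        _ = _ := by
            rw [iha, ihb, partialFractionSum_succ_succ, partialFractionSum_succ_succ]; ring

end PartialFractions

section Series

theorem tendsto_sum_range_sum_antidiagonal_mul {f g : ℕ → ℝ} {A B : ℝ}
    (hf : Tendsto (fun N => ∑ n ∈ range N, f n) atTop (𝓝 A))
    (hg : Summable fun n => |g n|) (hgB : Tendsto (fun N => ∑ n ∈ range N, g n) atTop (𝓝 B)) :
    Tendsto (fun N => ∑ n ∈ range N, ∑ ij ∈ antidiagonal n, f ij.1 * g ij.2) atTop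
      (𝓝 (A * B)) := by
  have hcau := cauchy_product (abv := abs)
    hg.hasSum.tendsto_sum_nat.cauchySeq.isCauSeq hf.cauchySeq.isCauSeq
  have hdiff : Tendsto (fun N => (∑ n ∈ range N, g n) * (∑ n ∈ range N, f n) -
      ∑ n ∈ range N, ∑ m ∈ range (n + 1), g m * f (n - m)) atTop (𝓝 0) := by
    rw [Metric.tendsto_atTop]
    simpa [Real.dist_eq] using hcau
  have hsum : ∀ N, ∑ n ∈ range N, ∑ ij ∈ antidiagonal n, f ij.1 * g ij.2 =
      ∑ n ∈ range N, ∑ m ∈ range (n + 1), g m * f (n - m) := fun N => by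
    refine sum_congr rfl fun n _ => ?_
    rw [← Nat.sum_antidiagonal_swap]
    simpa [mul_comm] using Nat.sum_antidiagonal_eq_sum_range_succ (fun i j => g i * f j) n
  simpa [hsum, mul_comm] using (hgB.mul hf).sub hdiff

theorem cauchySeq_sum_mul_of_summable_abs {b a : ℕ → ℝ} (hb : Summable fun n => |b n|)
    (ha : CauchySeq a) : CauchySeq fun N => ∑ n ∈ range N, b n * a n := by
  obtain ⟨C, hC⟩ := isBounded_iff_forall_norm_le.mp
    (Metric.isBounded_range_of_tendsto a ha.tendsto_limUnder)
  refine (Summable.of_norm_bounded (hb.mul_right C) fun n => ?_).hasSum.tendsto_sum_nat.cauchySeq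
  rw [norm_mul, Real.norm_eq_abs]
  exact mul_le_mul_of_nonneg_left (hC _ ⟨n, rfl⟩) (abs_nonneg _)

theorem cauchySeq_sum_mul_of_summable_mul_sub {c a : ℕ → ℝ} (L : ℝ)
    (hc : CauchySeq fun N => ∑ n ∈ range N, c n) (h : Summable fun n => c n * (a n - L)) :
    CauchySeq fun N => ∑ n ∈ range N, c n * a n := by
  have hsplit : (fun N => ∑ n ∈ range N, c n * a n)
      = fun N => (∑ n ∈ range N, c n) * L + ∑ n ∈ range N, c n * (a n - L) := by
    refine funext fun N => ?_
    rw [sum_mul, ← sum_add_distrib]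
    exact sum_congr rfl fun n _ => by ring
  rw [hsplit]
  exact (hc.tendsto_limUnder.mul_const L).cauchySeq.add h.hasSum.tendsto_sum_nat.cauchySeq

theorem tendsto_const_mul_of_ne_zero_imp {u : ℕ → ℝ} {c l : ℝ}
    (h : c ≠ 0 → Tendsto u atTop (𝓝 l)) : Tendsto (fun N => c * u N) atTop (𝓝 (c * l)) := by
  by_cases hc : c = 0
  · simp [hc]
  · exact (h hc).const_mul c

theorem antitone_one_div_add_pow {c : ℝ} (hc : 0 < c) (p : ℕ) :
    Antitone fun j : ℕ => 1 / ((j : ℝ) + c) ^ p :=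
  fun i j hij => one_div_le_one_div_of_le (by positivity) (by gcongr)

theorem tendsto_one_div_add_pow_zero (c : ℝ) {p : ℕ} (hp : p ≠ 0) :
    Tendsto (fun j : ℕ => 1 / ((j : ℝ) + c) ^ p) atTop (𝓝 0) := by
  simp only [one_div]
  exact ((tendsto_pow_atTop hp).comp
    (tendsto_atTop_add_const_right _ c tendsto_natCast_atTop_atTop)).inv_tendsto_atTop

theorem summable_one_div_add_pow {p : ℕ} (hp : 1 < p) (c : ℕ) :
    Summable fun j : ℕ => 1 / ((j : ℝ) + c) ^ p := by
  simpa using (summable_nat_add_iff c).mpr (Real.summable_one_div_nat_pow.mpr hp)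

theorem summable_one_div_add_two_pow {q : ℕ} (hq : 2 ≤ q) :
    Summable fun n : ℕ => 1 / ((n : ℝ) + 2) ^ q := by
  simpa using summable_one_div_add_pow (by omega : 1 < q) 2

theorem abs_neg_one_pow_div_add_two_pow (e n q : ℕ) :
    |(-1) ^ e / ((n : ℝ) + 2) ^ q| = 1 / ((n : ℝ) + 2) ^ q := by
  rw [abs_div, abs_pow, abs_neg, abs_one, one_pow, abs_of_pos (by positivity)]

theorem sum_Icc_one_eq_sum_range {M : Type*} [AddCommMonoid M] (f : ℕ → M) (m : ℕ) :
    ∑ j ∈ Icc 1 m, f j = ∑ i ∈ range m, f (i + 1) := by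
  rw [range_eq_Ico, sum_Ico_add' f 0 m 1, zero_add, Ico_add_one_right_eq_Icc]

end Series

section AlternatingZeta

noncomputable def altZetaPartial (p n : ℕ) : ℝ :=
  ∑ j ∈ range n, (-1 : ℝ) ^ (j + 1) / ((j : ℝ) + 1) ^ p

theorem altZetaPartial_eq_neg_sum (p n : ℕ) :
    altZetaPartial p n = -∑ j ∈ range n, (-1) ^ j * (1 / ((j : ℝ) + 1) ^ p) := by
  rw [altZetaPartial, ← sum_neg_distrib]
  exact sum_congr rfl fun j _ => by ring

theorem cauchySeq_altZetaPartial {p : ℕ} (hp : p ≠ 0) : CauchySeq (altZetaPartial p) := by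
  simp_rw [funext (altZetaPartial_eq_neg_sum p)]
  exact ((antitone_one_div_add_pow one_pos p).cauchySeq_alternating_series_of_tendsto_zero
    (tendsto_one_div_add_pow_zero 1 hp)).neg

theorem tendsto_altZetaPartial_zetaA {p : ℕ} (hp : p ≠ 0) :
    Tendsto (altZetaPartial p) atTop (𝓝 (zetaA p)) := by
  rw [zetaA, if_neg hp]
  exact (cauchySeq_altZetaPartial hp).tendsto_limUnder

theorem abs_altZetaPartial_sub_limUnder_le {p : ℕ} (hp : 1 < p) (n : ℕ) :
    |altZetaPartial p n - limUnder atTop (altZetaPartial p)| ≤ 1 / ((n : ℝ) + 1) ^ p := by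
  have hs := summable_one_div_add_pow hp 1
  simp only [Nat.cast_one] at hs
  have hlim : limUnder atTop (altZetaPartial p)
      = -∑' j : ℕ, (-1) ^ j * (1 / ((j : ℝ) + 1) ^ p) := by
    simp_rw [funext (altZetaPartial_eq_neg_sum p)]
    exact hs.tendsto_alternating_series_tsum.neg.limUnder_eq
  rw [hlim, altZetaPartial_eq_neg_sum, neg_sub_neg]
  exact alternating_series_error_bound _ (antitone_one_div_add_pow one_pos p) hs n

end AlternatingZeta

section DoubleZeta

noncomputable def dzetaA1Term (p q n : ℕ) : ℝ := 1 / ((n : ℝ) + 2) ^ q * altZetaPartial p (n + 1)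

noncomputable def dzetaA3Term (p q n : ℕ) : ℝ :=
  (-1) ^ (n + 2) / ((n : ℝ) + 2) ^ q * altZetaPartial p (n + 1)

theorem dzetaA1_eq_limUnder (p q : ℕ) :
    dzetaA1 p q = limUnder atTop fun N => ∑ n ∈ range N, dzetaA1Term p q n := rfl

theorem dzetaA3_eq_limUnder (p q : ℕ) :
    dzetaA3 p q = limUnder atTop fun N => ∑ n ∈ range N, dzetaA3Term p q n := rfl

theorem tendsto_dzetaA1 {p q : ℕ} (hp : p ≠ 0) (hq : 2 ≤ q) :
    Tendsto (fun N => ∑ n ∈ range N, dzetaA1Term p q n) atTop (𝓝 (dzetaA1 p q)) := by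
  rw [dzetaA1_eq_limUnder]
  refine (cauchySeq_sum_mul_of_summable_abs ?_
    ((cauchySeq_shift 1).mpr (cauchySeq_altZetaPartial hp))).tendsto_limUnder
  exact (summable_one_div_add_two_pow hq).congr fun n => (abs_of_pos (by positivity)).symm

theorem tendsto_dzetaA3 {p q : ℕ} (hp : p ≠ 0) (hq : q ≠ 0) (hpq : 3 ≤ p + q) :
    Tendsto (fun N => ∑ n ∈ range N, dzetaA3Term p q n) atTop (𝓝 (dzetaA3 p q)) := by
  rw [dzetaA3_eq_limUnder]
  refine CauchySeq.tendsto_limUnder ?_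
  have hshift := (cauchySeq_shift 1).mpr (cauchySeq_altZetaPartial hp)
  rcases (by omega : 2 ≤ q ∨ q = 1) with hq | rfl
  · exact cauchySeq_sum_mul_of_summable_abs
      ((summable_one_div_add_two_pow hq).congr fun n =>
        (abs_neg_one_pow_div_add_two_pow _ n q).symm) hshift
  -- For `q = 1` the outer series converges only conditionally: split off
  -- `L ∑ (-1)^n/(n+2)`; what is left is `O(1/(n+2)^(p+1))` by the alternating series bound.
  · have hc : CauchySeq fun N => ∑ n ∈ range N, (-1 : ℝ) ^ (n + 2) / ((n : ℝ) + 2) ^ 1 := by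
      have := (antitone_one_div_add_pow two_pos 1).cauchySeq_alternating_series_of_tendsto_zero
        (tendsto_one_div_add_pow_zero 2 one_ne_zero)
      convert this using 3 with N n
      ring
    refine cauchySeq_sum_mul_of_summable_mul_sub (limUnder atTop (altZetaPartial p)) hc
      (Summable.of_norm_bounded (summable_one_div_add_two_pow (q := 1 + p) (by omega)) fun n => ?_)
    have hrem := abs_altZetaPartial_sub_limUnder_le (by omega : 1 < p) (n + 1)
    rw [Nat.cast_succ, add_assoc, one_add_one_eq_two] at hrem
    rw [Real.norm_eq_abs, abs_mul, abs_neg_one_pow_div_add_two_pow, pow_add, ← one_div_mul_one_div]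
    exact mul_le_mul_of_nonneg_left hrem (by positivity)

theorem dzetaA1Term_eq_sum_antidiagonal (p q n : ℕ) :
    dzetaA1Term p q n = ∑ ij ∈ antidiagonal n,
      (-1) ^ (ij.1 + 1) * (1 / ((n : ℝ) + 2)) ^ q * (1 / ((ij.1 : ℝ) + 1)) ^ p := by
  rw [dzetaA1Term, altZetaPartial, Nat.sum_antidiagonal_eq_sum_range_succ_mk, mul_sum]
  exact sum_congr rfl fun j _ => by ring

theorem neg_one_pow_succ_of_add_eq {x y n : ℕ} (h : x + y = n) :
    (-1 : ℝ) ^ (x + 1) = (-1) ^ (n + 2) * (-1) ^ (y + 1) := by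
  rw [← h, ← pow_add, show x + y + 2 + (y + 1) = x + 1 + 2 * (y + 1) by ring, pow_add _ (x + 1),
    pow_mul]
  simp

theorem dzetaA3Term_eq_sum_antidiagonal (p q n : ℕ) :
    dzetaA3Term p q n = ∑ ij ∈ antidiagonal n,
      (-1) ^ (ij.1 + 1) * (1 / ((n : ℝ) + 2)) ^ q * (1 / ((ij.2 : ℝ) + 1)) ^ p := by
  rw [sum_congr rfl fun ij hij => by rw [neg_one_pow_succ_of_add_eq (mem_antidiagonal.mp hij)],
    ← Nat.sum_antidiagonal_swap, dzetaA3Term, altZetaPartial,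
    Nat.sum_antidiagonal_eq_sum_range_succ_mk, mul_sum]
  exact sum_congr rfl fun j _ => by simp only [Prod.swap_prod_mk]; ring

end DoubleZeta

theorem sum_antidiagonal_altZeta_mul_zeta_eq (a b n : ℕ) :
    ∑ ij ∈ antidiagonal n,
        (-1 : ℝ) ^ (ij.1 + 1) / ((ij.1 : ℝ) + 1) ^ (a + 1) * (1 / ((ij.2 : ℝ) + 1) ^ (b + 1))
      = ∑ i ∈ range (a + b + 1), ((i.choose a : ℝ) * dzetaA3Term (a + b + 1 - i) (i + 1) n
          + (i.choose b : ℝ) * dzetaA1Term (a + b + 1 - i) (i + 1) n) := by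
  simp_rw [dzetaA3Term_eq_sum_antidiagonal, dzetaA1Term_eq_sum_antidiagonal, mul_sum,
    ← sum_add_distrib]
  rw [sum_comm]
  refine sum_congr rfl fun ij hij => ?_
  set X := 1 / ((ij.1 : ℝ) + 1)
  set Y := 1 / ((ij.2 : ℝ) + 1)
  set t := 1 / ((n : ℝ) + 2)
  have hXY : X * Y = t * (X + Y) := by
    have hn : (ij.1 : ℝ) + ij.2 = n := by exact_mod_cast mem_antidiagonal.mp hij
    simp only [X, Y, t, ← hn]
    field_simp
    ring
  calc (-1 : ℝ) ^ (ij.1 + 1) / ((ij.1 : ℝ) + 1) ^ (a + 1) * (1 / ((ij.2 : ℝ) + 1) ^ (b + 1))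
      = (-1) ^ (ij.1 + 1) * (X ^ (a + 1) * Y ^ (b + 1)) := by simp only [X, Y, div_pow]; ring
    _ = (-1) ^ (ij.1 + 1) * (partialFractionSum Y t a b + partialFractionSum X t b a) := by
      rw [pow_succ_mul_pow_succ_eq_partialFractionSum hXY]
    _ = _ := by
      rw [partialFractionSum, partialFractionSum, add_comm b a, ← sum_add_distrib, mul_sum]
      exact sum_congr rfl fun i _ => by ring

theorem zetaA_mul_zeta_eq_sum (a b : ℕ) (hb : 1 ≤ b) :
    zetaA (a + 1) * zeta (b + 1) = ∑ i ∈ range (a + b + 1),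
      ((i.choose a : ℝ) * dzetaA3 (a + b + 1 - i) (i + 1)
        + (i.choose b : ℝ) * dzetaA1 (a + b + 1 - i) (i + 1)) := by
  have hsum : Summable fun m : ℕ => 1 / ((m : ℝ) + 1) ^ (b + 1) := by
    simpa using summable_one_div_add_pow (by omega : 1 < b + 1) 1
  have hzeta : Tendsto (fun N => ∑ m ∈ range N, 1 / ((m : ℝ) + 1) ^ (b + 1)) atTop
      (𝓝 (zeta (b + 1))) := by
    rw [zeta, if_neg (Nat.succ_ne_zero b)]
    exact hsum.hasSum.tendsto_sum_nat.cauchySeq.tendsto_limUnder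
  have hprod := tendsto_sum_range_sum_antidiagonal_mul
    (tendsto_altZetaPartial_zetaA (Nat.succ_ne_zero a)) hsum.abs hzeta
  simp_rw [sum_antidiagonal_altZeta_mul_zeta_eq] at hprod
  have hrhs : Tendsto (fun N => ∑ i ∈ range (a + b + 1),
      ((i.choose a : ℝ) * ∑ n ∈ range N, dzetaA3Term (a + b + 1 - i) (i + 1) n
        + (i.choose b : ℝ) * ∑ n ∈ range N, dzetaA1Term (a + b + 1 - i) (i + 1) n)) atTop
      (𝓝 (∑ i ∈ range (a + b + 1), ((i.choose a : ℝ) * dzetaA3 (a + b + 1 - i) (i + 1)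
        + (i.choose b : ℝ) * dzetaA1 (a + b + 1 - i) (i + 1)))) := by
    refine tendsto_finsetSum _ fun i hi => ?_
    have hi := mem_range.mp hi
    -- `ζ(overline{a+b+1}, 1)` diverges, but it comes with the coefficient `C(0, b) = 0`.
    refine ((tendsto_dzetaA3 (by omega) (by omega) (by omega)).const_mul _).add
      (tendsto_const_mul_of_ne_zero_imp fun hc => tendsto_dzetaA1 (by omega) ?_)
    by_contra! hi1
    exact hc (by simp [Nat.choose_eq_zero_of_lt (by omega : i < b)])
  refine tendsto_nhds_unique hprod (hrhs.congr fun N => ?_)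
  rw [sum_comm]
  simp only [sum_add_distrib, mul_sum]

theorem shuffle_alt (r s k : ℕ) (hr : 1 ≤ r) (hs : 2 ≤ s) (hk : r + s = k) :
    zetaA r * zeta s =
      (∑ j ∈ Finset.Icc 1 (k-1), ((j-1).choose (r-1) : ℝ) * dzetaA3 (k-j) j)
      + ∑ j ∈ Finset.Icc 1 (k-1), ((j-1).choose (s-1) : ℝ) * dzetaA1 (k-j) j := by
  obtain ⟨a, rfl⟩ := Nat.exists_eq_add_of_le' hr
  obtain ⟨b, rfl⟩ := Nat.exists_eq_add_of_le' (by omega : 1 ≤ s)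
  subst hk
  rw [zetaA_mul_zeta_eq_sum a b (by omega), sum_add_distrib,
    show a + 1 + (b + 1) - 1 = a + b + 1 by omega]
  simp only [sum_Icc_one_eq_sum_range, Nat.add_sub_cancel]
  congr 1 <;> refine sum_congr rfl fun i hi => ?_ <;> congr 2 <;> omega
end

section
/- For integers r, s ≥ 1 with r + s = k ≥ 3, the shuffle relation ζ(r̄)ζ(s̄) = Σ_{j=1}^{k-1} C(j-1, r-1) ζ(k-j, j̄) + Σ_{j=1}^{k-1} C(j-1, s-1) ζ(k-j, j̄) holds. -/
open Filter Finset Real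

/-!
Iterating `1/(xy) = (1/x + 1/y)/(x + y)` expands `1/(x^r y^s)` in partial fractions with respect
to `x + y`, the coefficients obeying Pascal's rule. With `x = i`, `y = m - i` this turns the `m`-th
term of the Cauchy product of the series for `ζ(r̄)` and `ζ(s̄)` into
`Σ_j (C(j-1,r-1) + C(j-1,s-1)) (-1)^m/m^j Σ_{i<m} 1/i^(k-j)`. As `k ≥ 3`, one of `r, s` is at least
`2`, so one of the two series converges absolutely and Mertens' theorem identifies the sum of the
Cauchy product with `ζ(r̄) ζ(s̄)`. The double series `ζ(k-j, j̄)` converge by the alternating series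
test: `m⁻¹ Σ_{i<m} 1/i^(k-j)` is a Cesàro mean of a null sequence, and it decreases in `m`.
-/

open Topology

section PartialFractions

variable {K : Type*} [Field K] {x y : K}

theorem inv_mul_pow_eq_sum (hx : x ≠ 0) (hy : y ≠ 0) (hxy : x + y ≠ 0) (b : ℕ) :
    (x * y ^ (b + 1))⁻¹ =
      ∑ j ∈ range (b + 1), ((x + y) ^ (j + 1) * y ^ (b + 1 - j))⁻¹ + ((x + y) ^ (b + 1) * x)⁻¹ := by
  induction b with
  | zero => simp only [zero_add, sum_range_one]; field_simp; ring
  | succ b ih =>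
    have hsplit : ((x + y) ^ (b + 1) * x)⁻¹ * y⁻¹ =
        ((x + y) ^ (b + 2) * y)⁻¹ + ((x + y) ^ (b + 2) * x)⁻¹ := by
      field_simp; ring
    rw [sum_range_succ, Nat.add_sub_cancel_left, pow_one, show b + 1 + 1 = b + 2 from rfl,
      add_assoc _ ((_ : K)⁻¹), ← hsplit]
    calc (x * y ^ (b + 2))⁻¹ = (x * y ^ (b + 1))⁻¹ * y⁻¹ := by rw [pow_succ, ← mul_assoc, mul_inv]
      _ = _ := by
        rw [ih, add_mul, sum_mul]
        congr 1
        refine sum_congr rfl fun j hj => ?_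
        rw [mul_inv, mul_inv, mul_assoc, ← mul_inv (y ^ _), ← pow_succ]
        have := mem_range.1 hj
        congr 4
        omega

theorem inv_pow_mul_pow_eq_sum (hx : x ≠ 0) (hy : y ≠ 0) (hxy : x + y ≠ 0) (a b : ℕ) :
    (x ^ (a + 1) * y ^ (b + 1))⁻¹ =
      ∑ j ∈ range (a + b + 1),
        ((j.choose a : K) / ((x + y) ^ (j + 1) * y ^ (a + b + 1 - j)) +
          (j.choose b : K) / ((x + y) ^ (j + 1) * x ^ (a + b + 1 - j))) := by
  have base : ∀ {x y : K}, x ≠ 0 → y ≠ 0 → x + y ≠ 0 → ∀ b : ℕ,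
      (x ^ (0 + 1) * y ^ (b + 1))⁻¹ =
        ∑ j ∈ range (0 + b + 1),
          ((j.choose 0 : K) / ((x + y) ^ (j + 1) * y ^ (0 + b + 1 - j)) +
            (j.choose b : K) / ((x + y) ^ (j + 1) * x ^ (0 + b + 1 - j))) := by
    intro x y hx hy hxy b
    have hcollapse : ∑ j ∈ range (b + 1), (j.choose b : K) / ((x + y) ^ (j + 1) * x ^ (b + 1 - j))
        = ((x + y) ^ (b + 1) * x)⁻¹ := by
      rw [sum_range_succ, sum_eq_zero fun j hj => by
        rw [Nat.choose_eq_zero_of_lt (mem_range.1 hj), Nat.cast_zero, zero_div]]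
      simp
    simp only [zero_add, pow_one, Nat.choose_zero_right, Nat.cast_one, one_div, sum_add_distrib,
      hcollapse]
    exact inv_mul_pow_eq_sum hx hy hxy b
  induction a generalizing b with
  | zero => exact base hx hy hxy b
  | succ a iha =>
    induction b with
    | zero =>
      rw [mul_comm, base hy hx (add_comm x y ▸ hxy) (a + 1), add_comm y x]
      simp only [zero_add, add_zero]
      exact sum_congr rfl fun _ _ => add_comm _ _
    | succ b ihb =>
      have hrec : (x ^ (a + 2) * y ^ (b + 2))⁻¹ =
          (x + y)⁻¹ * ((x ^ (a + 1) * y ^ (b + 2))⁻¹ + (x ^ (a + 2) * y ^ (b + 1))⁻¹) := by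
        field_simp; ring
      rw [hrec, iha, ihb]
      simp only [show a + (b + 1) + 1 = a + b + 2 by omega, show a + 1 + b + 1 = a + b + 2 by omega,
        show a + 1 + (b + 1) + 1 = a + b + 2 + 1 by omega]
      rw [← sum_add_distrib, mul_sum, sum_range_succ' _ (a + b + 2)]
      simp only [Nat.choose_succ_succ', Nat.choose_zero_succ, Nat.cast_zero, zero_div, add_zero]
      refine sum_congr rfl fun j hj => ?_
      rw [show a + b + 2 + 1 - (j + 1) = a + b + 2 - j by omega]
      push_cast
      field_simp
      ring

end PartialFractions

noncomputable def zetaATerm (k m : ℕ) : ℝ := (-1 : ℝ) ^ (m + 1) / ((m + 1 : ℝ)) ^ k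

noncomputable def dzetaA2Term (r s m : ℕ) : ℝ :=
  ((-1 : ℝ) ^ (m + 2) / ((m + 2 : ℝ)) ^ s) * ∑ j ∈ range (m + 1), 1 / ((j + 1 : ℝ)) ^ r

theorem sum_range_reflect_one_div_pow (e m : ℕ) :
    ∑ i ∈ range (m + 1), 1 / (((m - i : ℕ) : ℝ) + 1) ^ e =
      ∑ i ∈ range (m + 1), 1 / ((i + 1 : ℝ)) ^ e := by
  rw [← sum_range_reflect]
  refine sum_congr rfl fun i hi => ?_
  rw [show m + 1 - 1 - i = m - i by omega, Nat.sub_sub_self (by simpa [Nat.lt_succ_iff] using hi)]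

theorem sum_zetaATerm_mul_zetaATerm (a b m : ℕ) :
    ∑ i ∈ range (m + 1), zetaATerm (a + 1) i * zetaATerm (b + 1) (m - i) =
      ∑ j ∈ range (a + b + 1),
        ((j.choose a + j.choose b : ℕ) : ℝ) * dzetaA2Term (a + b + 1 - j) (j + 1) m := by
  have hterm : ∀ i ∈ range (m + 1), zetaATerm (a + 1) i * zetaATerm (b + 1) (m - i) =
      ∑ j ∈ range (a + b + 1), (-1 : ℝ) ^ (m + 2) *
        ((j.choose a : ℝ) / ((m + 2 : ℝ) ^ (j + 1) * (((m - i : ℕ) : ℝ) + 1) ^ (a + b + 1 - j)) +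
          (j.choose b : ℝ) / ((m + 2 : ℝ) ^ (j + 1) * ((i : ℝ) + 1) ^ (a + b + 1 - j))) := by
    intro i hi
    have him : i ≤ m := Nat.lt_succ_iff.1 (mem_range.1 hi)
    have hsum : ((i : ℝ) + 1) + (((m - i : ℕ) : ℝ) + 1) = (m + 2 : ℝ) := by
      rw [Nat.cast_sub him]; ring
    have hsign : (-1 : ℝ) ^ (i + 1) * (-1) ^ (m - i + 1) = (-1) ^ (m + 2) := by
      rw [← pow_add]; congr 1; omega
    rw [← mul_sum, ← hsum, ← inv_pow_mul_pow_eq_sum (by positivity) (by positivity) (by positivity),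
      zetaATerm, zetaATerm, div_mul_div_comm, hsign, div_eq_mul_inv]
  rw [sum_congr rfl hterm, sum_comm]
  refine sum_congr rfl fun j _ => ?_
  have hpull : ∀ (c : ℝ) (f : ℕ → ℝ), ∑ i ∈ range (m + 1), c / ((m + 2 : ℝ) ^ (j + 1) * f i) =
      c / (m + 2 : ℝ) ^ (j + 1) * ∑ i ∈ range (m + 1), 1 / f i := fun c f => by
    simp only [mul_sum, div_mul_div_comm, mul_one]
  rw [dzetaA2Term, ← mul_sum, sum_add_distrib, hpull, hpull, sum_range_reflect_one_div_pow]
  push_cast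
  ring

theorem tendsto_sum_range_cauchy_product {f g : ℕ → ℝ} {A B : ℝ} (hf : Summable fun n => |f n|)
    (hA : Tendsto (fun N => ∑ n ∈ range N, f n) atTop (𝓝 A))
    (hB : Tendsto (fun N => ∑ n ∈ range N, g n) atTop (𝓝 B)) :
    Tendsto (fun N => ∑ n ∈ range N, ∑ m ∈ range (n + 1), f m * g (n - m)) atTop (𝓝 (A * B)) := by
  have hdiff : Tendsto (fun N => (∑ n ∈ range N, f n) * (∑ n ∈ range N, g n) -
      ∑ n ∈ range N, ∑ m ∈ range (n + 1), f m * g (n - m)) atTop (𝓝 0) := by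
    rw [Metric.tendsto_atTop]
    intro ε hε
    simpa only [Real.dist_eq, sub_zero] using
      cauchy_product (abv := abs) (isCauSeq_iff_cauchySeq.2 hf.hasSum.tendsto_sum_nat.cauchySeq)
        (isCauSeq_iff_cauchySeq.2 hB.cauchySeq) ε hε
  simpa using (hA.mul hB).sub hdiff

theorem Antitone.exists_tendsto_sum_neg_one_pow_add_mul {f : ℕ → ℝ} (hfa : Antitone f)
    (hf0 : Tendsto f atTop (𝓝 0)) (c : ℕ) :
    ∃ l, Tendsto (fun N => ∑ n ∈ range N, (-1 : ℝ) ^ (n + c) * f n) atTop (𝓝 l) := by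
  obtain ⟨l, hl⟩ := hfa.tendsto_alternating_series_of_tendsto_zero hf0
  refine ⟨(-1) ^ c * l, (hl.const_mul _).congr fun N => ?_⟩
  simp only [mul_sum, pow_add]
  exact sum_congr rfl fun _ _ => by ring

theorem antitone_one_div_add_one_pow (k : ℕ) : Antitone fun n : ℕ => 1 / ((n + 1 : ℝ)) ^ k :=
  fun _ _ hmn => one_div_le_one_div_of_le (by positivity) (by gcongr)

theorem tendsto_one_div_add_one_pow {k : ℕ} (hk : k ≠ 0) :
    Tendsto (fun n : ℕ => 1 / ((n + 1 : ℝ)) ^ k) atTop (𝓝 0) := by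
  simpa [one_div_pow, zero_pow hk] using (tendsto_one_div_add_atTop_nhds_zero_nat (𝕜 := ℝ)).pow k

theorem tendsto_zetaA {k : ℕ} (hk : k ≠ 0) :
    Tendsto (fun N => ∑ m ∈ range N, zetaATerm k m) atTop (𝓝 (zetaA k)) := by
  rw [zetaA, if_neg hk]
  refine tendsto_nhds_limUnder ?_
  simpa only [zetaATerm, mul_one_div] using
    (antitone_one_div_add_one_pow k).exists_tendsto_sum_neg_one_pow_add_mul
      (tendsto_one_div_add_one_pow hk) 1

theorem antitone_sum_range_one_div_pow_div_pow {r s : ℕ} (hr : r ≠ 0) (hs : s ≠ 0) :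
    Antitone fun m : ℕ => (∑ i ∈ range (m + 1), 1 / ((i + 1 : ℝ)) ^ r) / ((m + 2 : ℝ)) ^ s := by
  refine antitone_nat_of_succ_le fun m => ?_
  set c := ∑ i ∈ range (m + 1), 1 / ((i + 1 : ℝ)) ^ r
  set P : ℝ := m + 2
  have hP : 1 ≤ P := by simp only [P]; linarith [(m.cast_nonneg : (0 : ℝ) ≤ m)]
  have hc : 1 ≤ c := by
    rw [show c = _ from sum_range_succ' _ m]
    simp only [CharP.cast_eq_zero, zero_add, one_pow, div_one, le_add_iff_nonneg_left]
    positivity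
  have hnext : ∑ i ∈ range (m + 1 + 1), 1 / ((i + 1 : ℝ)) ^ r = c + 1 / P ^ r := by
    rw [sum_range_succ]; push_cast; ring
  have hstep : 1 / P ^ r ≤ c / P := by
    calc 1 / P ^ r ≤ 1 / P := one_div_le_one_div_of_le (by positivity) (le_self_pow₀ hP hr)
      _ ≤ c / P := by gcongr
  obtain ⟨t, rfl⟩ : ∃ t, s = t + 1 := Nat.exists_eq_succ_of_ne_zero hs
  simp only [hnext, Nat.cast_add, Nat.cast_one, show (m : ℝ) + 1 + 2 = P + 1 by simp only [P]; ring]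
  calc (c + 1 / P ^ r) / (P + 1) ^ (t + 1) ≤ (c + c / P) / (P + 1) ^ (t + 1) := by gcongr
    _ = c / (P + 1) ^ t / P := by field_simp; ring
    _ ≤ c / P ^ t / P := by gcongr; linarith
    _ = c / P ^ (t + 1) := by rw [pow_succ, div_div]

theorem tendsto_sum_range_one_div_pow_div_pow {r s : ℕ} (hr : r ≠ 0) (hs : s ≠ 0) :
    Tendsto (fun m : ℕ => (∑ i ∈ range (m + 1), 1 / ((i + 1 : ℝ)) ^ r) / ((m + 2 : ℝ)) ^ s)
      atTop (𝓝 0) := by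
  have hmean := (tendsto_one_div_add_one_pow hr).cesaro.comp (tendsto_add_atTop_nat 1)
  refine squeeze_zero (fun m => by positivity) (fun m => ?_) hmean
  simp only [Function.comp_apply, Nat.cast_add, Nat.cast_one, ← div_eq_inv_mul]
  gcongr
  calc (m + 1 : ℝ) ≤ m + 2 := by linarith
    _ ≤ (m + 2) ^ s := le_self_pow₀ (by linarith [(m.cast_nonneg : (0 : ℝ) ≤ m)]) hs

theorem tendsto_dzetaA2 {r s : ℕ} (hr : r ≠ 0) (hs : s ≠ 0) :
    Tendsto (fun N => ∑ m ∈ range N, dzetaA2Term r s m) atTop (𝓝 (dzetaA2 r s)) := by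
  refine tendsto_nhds_limUnder ?_
  simpa only [dzetaA2Term, div_mul_eq_mul_div, mul_div_assoc] using
    (antitone_sum_range_one_div_pow_div_pow hr hs).exists_tendsto_sum_neg_one_pow_add_mul
      (tendsto_sum_range_one_div_pow_div_pow hr hs) 2

theorem summable_abs_zetaATerm {k : ℕ} (hk : 2 ≤ k) : Summable fun n => |zetaATerm k n| := by
  refine ((summable_nat_add_iff 1).2 (Real.summable_one_div_nat_pow.2 hk)).congr fun n => ?_
  rw [zetaATerm, abs_div, abs_pow, abs_neg, abs_one, one_pow, abs_of_pos (by positivity)]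
  push_cast
  ring

theorem zetaA_mul_zetaA_eq_sum {a : ℕ} (ha : a ≠ 0) (b : ℕ) :
    zetaA (a + 1) * zetaA (b + 1) =
      ∑ j ∈ range (a + b + 1),
        ((j.choose a + j.choose b : ℕ) : ℝ) * dzetaA2 (a + b + 1 - j) (j + 1) := by
  have hprod := tendsto_sum_range_cauchy_product (summable_abs_zetaATerm (by omega : 2 ≤ a + 1))
    (tendsto_zetaA a.succ_ne_zero) (tendsto_zetaA b.succ_ne_zero)
  have hsum : Tendsto (fun N => ∑ j ∈ range (a + b + 1), ((j.choose a + j.choose b : ℕ) : ℝ) *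
      ∑ m ∈ range N, dzetaA2Term (a + b + 1 - j) (j + 1) m) atTop
      (𝓝 (∑ j ∈ range (a + b + 1),
        ((j.choose a + j.choose b : ℕ) : ℝ) * dzetaA2 (a + b + 1 - j) (j + 1))) :=
    tendsto_finsetSum _ fun j hj =>
      (tendsto_dzetaA2 (by have := mem_range.1 hj; omega) j.succ_ne_zero).const_mul _
  refine tendsto_nhds_unique hprod (hsum.congr fun N => ?_)
  simp only [sum_zetaATerm_mul_zetaATerm, mul_sum]
  exact sum_comm

theorem shuffle_altalt (r s k : ℕ) (hr : 1 ≤ r) (hs : 1 ≤ s) (hk : r + s = k)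
    (hk3 : 3 ≤ k) :
    zetaA r * zetaA s =
      (∑ j ∈ Finset.Icc 1 (k-1), ((j-1).choose (r-1) : ℝ) * dzetaA2 (k-j) j)
      + ∑ j ∈ Finset.Icc 1 (k-1), ((j-1).choose (s-1) : ℝ) * dzetaA2 (k-j) j := by
  obtain ⟨a, rfl⟩ := Nat.exists_eq_add_of_le' hr
  obtain ⟨b, rfl⟩ := Nat.exists_eq_add_of_le' hs
  subst hk
  have hIcc : ∀ f : ℕ → ℝ,
      ∑ j ∈ Icc 1 (a + 1 + (b + 1) - 1), f j = ∑ j ∈ range (a + b + 1), f (j + 1) := by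
    intro f
    rw [show a + 1 + (b + 1) - 1 = a + b + 1 by omega, ← Ico_add_one_right_eq_Icc,
      sum_Ico_eq_sum_range]
    simp only [add_comm 1, Nat.add_sub_cancel]
  rw [hIcc, hIcc, ← sum_add_distrib]
  simp only [Nat.add_sub_cancel, ← add_mul, ← Nat.cast_add,
    show ∀ j, a + 1 + (b + 1) - (j + 1) = a + b + 1 - j by omega]
  rcases Nat.eq_zero_or_pos a with rfl | ha
  · rw [mul_comm, zetaA_mul_zetaA_eq_sum (by omega : b ≠ 0)]
    simp only [add_comm (Nat.choose _ b), add_comm b 0]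
  · exact zetaA_mul_zetaA_eq_sum ha.ne' b
end

section
/- For an integer k ≥ 3, Σ_{s=2}^{k-1} ζ(k-s, s) = ζ(k), where ζ(r, s) = Σ_{1 ≤ m < n} 1/(m^r n^s) is the double zeta value. -/
open Filter Finset Real

/-!
Put `n = m + d`. Summing a geometric progression,
`Σ_{s=2}^{k-1} 1/(m^{k-s} n^s) = m^{1-k} (1/d - 1/n) - 1/(d n^{k-1})`,
and both terms on the right have convergent double series since `H_n ≤ 1 + log n = O(√n)`.
For fixed `m` the first telescopes in `d` to `H_m / m^{k-1}`; for fixed `n` the second sums to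
`H_{n-1} / n^{k-1}`. As `H_m - H_{m-1} = 1/m`, the two series differ by `Σ 1/m^k = ζ(k)`.
-/

open Topology

theorem HasSum.sum_antidiagonal {A α : Type*} [AddMonoid A] [HasAntidiagonal A]
    [AddCommMonoid α] [TopologicalSpace α] [ContinuousAdd α] [RegularSpace α]
    {f : A × A → α} {a : α} (hf : HasSum f a) :
    HasSum (fun n => ∑ p ∈ antidiagonal n, f p) a :=
  (HasAntidiagonal.sigmaAntidiagonalEquivProd.hasSum_iff.2 hf).sigma fun _ => Finset.hasSum _ _

theorem Antitone.hasSum_sub_succ {f : ℕ → ℝ} (hf : Antitone f) (hf0 : Tendsto f atTop (𝓝 0)) :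
    HasSum (fun n => f n - f (n + 1)) (f 0) := by
  rw [hasSum_iff_tendsto_nat_of_nonneg (fun n => sub_nonneg.2 (hf n.le_succ))]
  simp_rw [sum_range_sub']
  simpa using tendsto_const_nhds.sub hf0

theorem hasSum_one_div_sub_one_div_add (m : ℕ) :
    HasSum (fun b : ℕ => 1 / ((b : ℝ) + 1) - 1 / ((b : ℝ) + 1 + m)) (harmonic m) := by
  induction m with
  | zero => simp
  | succ m ih =>
    have htel : HasSum (fun b : ℕ => 1 / ((b : ℝ) + 1 + m) - 1 / (((b + 1 : ℕ) : ℝ) + 1 + m))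
        (1 / ((0 : ℕ) + 1 + m)) := by
      refine Antitone.hasSum_sub_succ (f := fun b : ℕ => 1 / ((b : ℝ) + 1 + m)) ?_ ?_
      · intro a b hab
        dsimp only
        gcongr
      · refine (tendsto_one_div_add_atTop_nhds_zero_nat.comp (tendsto_add_atTop_nat m)).congr
          fun b => ?_
        simp only [Function.comp_apply, Nat.cast_add]
        ring
    convert ih.add htel using 1
    · ext b; push_cast; ring
    · push_cast [harmonic_succ]; ring

theorem sum_Icc_pow_mul_pow_mul_sub {R : Type*} [CommRing R] (x y : R) {k : ℕ} (hk : 2 ≤ k) :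
    (∑ s ∈ Icc 2 (k - 1), x ^ (k - s) * y ^ s) * (x - y) = x ^ (k - 1) * y ^ 2 - x * y ^ k := by
  induction k, hk using Nat.le_induction with
  | base => simp
  | succ k hk ih =>
    obtain ⟨j, rfl⟩ : ∃ j, k = j + 1 := ⟨k - 1, by omega⟩
    have hsplit : ∑ s ∈ Icc 2 (j + 1), x ^ (j + 1 + 1 - s) * y ^ s
        = x * ∑ s ∈ Icc 2 j, x ^ (j + 1 - s) * y ^ s + x * y ^ (j + 1) := by
      rw [sum_Icc_succ_top hk, mul_sum, show j + 1 + 1 - (j + 1) = 1 by omega, pow_one]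
      congr 1
      refine sum_congr rfl fun s hs => ?_
      rw [show j + 1 + 1 - s = j + 1 - s + 1 by grind, pow_succ]
      ring
    simp only [Nat.add_sub_cancel] at ih ⊢
    rw [hsplit, add_mul, mul_assoc, ih]
    ring

theorem sum_Icc_one_div_pow_mul_pow {K : Type*} [Field K] {m n : K} (hm : m ≠ 0) (hn : n ≠ 0)
    (hmn : m ≠ n) {k : ℕ} (hk : 2 ≤ k) :
    ∑ s ∈ Icc 2 (k - 1), 1 / (m ^ (k - s) * n ^ s)
      = 1 / m ^ (k - 1) * (1 / (n - m) - 1 / n) - 1 / ((n - m) * n ^ (k - 1)) := by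
  have hne : 1 / m - 1 / n ≠ 0 := by
    rw [sub_ne_zero]; exact fun h => hmn (by simpa using h)
  have h := sum_Icc_pow_mul_pow_mul_sub (1 / m) (1 / n) hk
  simp_rw [one_div_pow, one_div_mul_one_div] at h
  rw [eq_div_of_mul_eq hne h]
  obtain ⟨j, rfl⟩ : ∃ j, k = j + 2 := ⟨k - 2, by omega⟩
  have hnm : n - m ≠ 0 := sub_ne_zero.2 (Ne.symm hmn)
  rw [show j + 2 - 1 = j + 1 by omega]
  field_simp
  ring

theorem summable_harmonic_div_pow {p : ℕ} (hp : 2 ≤ p) :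
    Summable fun n : ℕ => (harmonic n : ℝ) / (n : ℝ) ^ p := by
  refine ((Real.summable_nat_rpow_inv.2 (by norm_num : (1 : ℝ) < 3 / 2)).mul_left 3).of_nonneg_of_le
    (fun n => div_nonneg (by simp only [harmonic]; push_cast; positivity) (by positivity)) fun n => ?_
  rcases Nat.eq_zero_or_pos n with rfl | hn
  · simp
  have hx : (1 : ℝ) ≤ n := by exact_mod_cast hn
  have hH : (harmonic n : ℝ) ≤ 3 * (n : ℝ) ^ (1 / 2 : ℝ) := by
    have h1 := harmonic_le_one_add_log n
    have h2 := Real.log_le_rpow_div (Nat.cast_nonneg n) (by norm_num : (0 : ℝ) < 1 / 2)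
    have h3 := Real.one_le_rpow hx (by norm_num : (0 : ℝ) ≤ 1 / 2)
    linarith
  have hsplit : (n : ℝ) ^ (1 / 2 : ℝ) * (n : ℝ) ^ (3 / 2 : ℝ) = (n : ℝ) ^ 2 := by
    rw [← Real.rpow_add (by positivity)]; norm_num
  calc (harmonic n : ℝ) / (n : ℝ) ^ p ≤ 3 * (n : ℝ) ^ (1 / 2 : ℝ) / (n : ℝ) ^ 2 :=
        div_le_div₀ (by positivity) hH (by positivity) (pow_le_pow_right₀ hx hp)
    _ = 3 * ((n : ℝ) ^ (3 / 2 : ℝ))⁻¹ := by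
        rw [← hsplit]
        have : (0 : ℝ) < (n : ℝ) ^ (1 / 2 : ℝ) := by positivity
        field_simp

theorem summable_one_div_add_one_pow {k : ℕ} (hk : 1 < k) :
    Summable fun m : ℕ => 1 / ((m : ℝ) + 1) ^ k := by
  simpa using (summable_nat_add_iff 1).2 (Real.summable_one_div_nat_pow.2 hk)

theorem zeta_eq_tsum {k : ℕ} (hk : 1 < k) : zeta k = ∑' m : ℕ, 1 / ((m : ℝ) + 1) ^ k := by
  rw [zeta, if_neg (by omega)]
  exact (summable_one_div_add_one_pow hk).hasSum.tendsto_sum_nat.limUnder_eq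

/-- The pair `(i, j)` stands for `m = i + 1 < n = m + j + 1`. -/
noncomputable def dzetaTerm (r s : ℕ) (p : ℕ × ℕ) : ℝ :=
  1 / (((p.1 : ℝ) + 1) ^ r * ((p.1 : ℝ) + p.2 + 2) ^ s)

theorem dzetaTerm_nonneg (r s : ℕ) (p : ℕ × ℕ) : 0 ≤ dzetaTerm r s p := by
  unfold dzetaTerm; positivity

theorem dzeta_eq_tsum {r s : ℕ} (h : Summable (dzetaTerm r s)) :
    dzeta r s = ∑' p, dzetaTerm r s p := by
  unfold dzeta
  refine Tendsto.limUnder_eq ?_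
  convert h.hasSum.sum_antidiagonal.tendsto_sum_nat using 3 with N n
  rw [Nat.sum_antidiagonal_eq_sum_range_succ_mk, mul_sum]
  refine sum_congr rfl fun j hj => ?_
  have hjn : (j : ℝ) + ((n - j : ℕ) : ℝ) = n := by
    rw [Nat.cast_sub (by rw [mem_range] at hj; omega)]; ring
  rw [dzetaTerm, hjn, one_div_mul_one_div, mul_comm]

-- In the coordinates of `dzetaTerm`: `m^{1-k} (1/(n-m) - 1/n)` and `1/((n-m) n^{k-1})`.
noncomputable def eulerTermA (k : ℕ) (p : ℕ × ℕ) : ℝ :=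
  1 / ((p.1 : ℝ) + 1) ^ (k - 1) * (1 / ((p.2 : ℝ) + 1) - 1 / ((p.1 : ℝ) + p.2 + 2))

noncomputable def eulerTermB (k : ℕ) (p : ℕ × ℕ) : ℝ :=
  1 / (((p.2 : ℝ) + 1) * ((p.1 : ℝ) + p.2 + 2) ^ (k - 1))

theorem sum_dzetaTerm {k : ℕ} (hk : 2 ≤ k) (p : ℕ × ℕ) :
    ∑ s ∈ Icc 2 (k - 1), dzetaTerm (k - s) s p = eulerTermA k p - eulerTermB k p := by
  have h := sum_Icc_one_div_pow_mul_pow (m := (p.1 : ℝ) + 1) (n := (p.1 : ℝ) + p.2 + 2)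
    (by positivity) (by positivity) (by linarith [(p.2.cast_nonneg : (0 : ℝ) ≤ p.2)]) hk
  rwa [show (p.1 : ℝ) + p.2 + 2 - ((p.1 : ℝ) + 1) = p.2 + 1 by ring] at h

theorem eulerTermB_nonneg (k : ℕ) (p : ℕ × ℕ) : 0 ≤ eulerTermB k p := by
  unfold eulerTermB; positivity

theorem eulerTermB_le_eulerTermA {k : ℕ} (hk : 2 ≤ k) (p : ℕ × ℕ) :
    eulerTermB k p ≤ eulerTermA k p :=
  sub_nonneg.1 (sum_dzetaTerm hk p ▸ sum_nonneg fun _ _ => dzetaTerm_nonneg _ _ p)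

theorem dzetaTerm_le_eulerTermA {k s : ℕ} (hk : 2 ≤ k) (hs : s ∈ Icc 2 (k - 1)) (p : ℕ × ℕ) :
    dzetaTerm (k - s) s p ≤ eulerTermA k p :=
  calc dzetaTerm (k - s) s p ≤ ∑ t ∈ Icc 2 (k - 1), dzetaTerm (k - t) t p :=
        single_le_sum (fun t _ => dzetaTerm_nonneg (k - t) t p) hs
    _ = eulerTermA k p - eulerTermB k p := sum_dzetaTerm hk p
    _ ≤ eulerTermA k p := sub_le_self _ (eulerTermB_nonneg k p)

theorem hasSum_eulerTermA_fiber (k i : ℕ) :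
    HasSum (fun j => eulerTermA k (i, j)) ((harmonic (i + 1) : ℝ) / ((i : ℝ) + 1) ^ (k - 1)) := by
  have hrow : (fun j => eulerTermA k (i, j)) = fun j : ℕ =>
      1 / ((i : ℝ) + 1) ^ (k - 1) * (1 / ((j : ℝ) + 1) - 1 / ((j : ℝ) + 1 + ((i + 1 : ℕ) : ℝ))) := by
    funext j; rw [eulerTermA]; push_cast; ring_nf
  rw [hrow, ← one_div_mul_eq_div _ (harmonic (i + 1) : ℝ)]
  exact (hasSum_one_div_sub_one_div_add (i + 1)).mul_left _

theorem summable_eulerTermA {k : ℕ} (hk : 3 ≤ k) : Summable (eulerTermA k) := by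
  refine (summable_prod_of_nonneg fun p =>
    (eulerTermB_nonneg k p).trans (eulerTermB_le_eulerTermA (by omega) p)).2
    ⟨fun i => (hasSum_eulerTermA_fiber k i).summable, ?_⟩
  simp_rw [(hasSum_eulerTermA_fiber k _).tsum_eq]
  simpa using (summable_nat_add_iff 1).2 (summable_harmonic_div_pow (p := k - 1) (by omega))

theorem sum_antidiagonal_eulerTermB (k n : ℕ) :
    ∑ p ∈ antidiagonal n, eulerTermB k p = (harmonic (n + 1) : ℝ) / ((n : ℝ) + 2) ^ (k - 1) := by
  have hterm : ∀ p ∈ antidiagonal n,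
      eulerTermB k p = 1 / ((n : ℝ) + 2) ^ (k - 1) * (1 / ((p.2 : ℝ) + 1)) := by
    intro p hp
    have hpn : (p.1 : ℝ) + p.2 = n := by exact_mod_cast mem_antidiagonal.1 hp
    rw [eulerTermB, hpn, one_div_mul_one_div, mul_comm]
  rw [sum_congr rfl hterm, ← mul_sum, ← Nat.sum_antidiagonal_swap]
  simp only [Prod.snd_swap]
  rw [Nat.sum_antidiagonal_eq_sum_range_succ_mk]
  rw [one_div_mul_eq_div]
  push_cast [harmonic, one_div]
  rfl

theorem tsum_harmonic_div_pow_sub_tsum {k : ℕ} (hk : 3 ≤ k) :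
    ∑' i : ℕ, (harmonic (i + 1) : ℝ) / ((i : ℝ) + 1) ^ (k - 1)
      - ∑' n : ℕ, (harmonic (n + 1) : ℝ) / ((n : ℝ) + 2) ^ (k - 1)
      = ∑' m : ℕ, 1 / ((m : ℝ) + 1) ^ k := by
  obtain ⟨j, rfl⟩ : ∃ j, k = j + 1 := ⟨k - 1, by omega⟩
  simp only [Nat.add_sub_cancel]
  set e : ℕ → ℝ := fun i => (harmonic (i + 1) : ℝ) / ((i : ℝ) + 1) ^ j
  set z : ℕ → ℝ := fun m => 1 / ((m : ℝ) + 1) ^ (j + 1)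
  have he : Summable e := by
    simpa only [Nat.cast_add, Nat.cast_one] using
      (summable_nat_add_iff 1).2 (summable_harmonic_div_pow (p := j) (by omega))
  have hz : Summable z := summable_one_div_add_one_pow (by omega)
  have hdiag : ∀ n : ℕ, (harmonic (n + 1) : ℝ) / ((n : ℝ) + 2) ^ j = e (n + 1) - z (n + 1) := by
    intro n
    simp only [e, z, harmonic_succ]
    push_cast
    field_simp
    ring
  simp_rw [hdiag]
  rw [Summable.tsum_sub ((summable_nat_add_iff 1).2 he) ((summable_nat_add_iff 1).2 hz),
    he.tsum_eq_zero_add, hz.tsum_eq_zero_add, show e 0 = z 0 by simp [e, z]]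
  ring

theorem euler_sum_formula (k : ℕ) (hk : 3 ≤ k) :
    ∑ s ∈ Finset.Icc 2 (k-1), dzeta (k-s) s = zeta k := by
  have hA := summable_eulerTermA hk
  have hB : Summable (eulerTermB k) :=
    hA.of_nonneg_of_le (eulerTermB_nonneg k) (eulerTermB_le_eulerTermA (by omega))
  have hterm : ∀ s ∈ Icc 2 (k - 1), Summable (dzetaTerm (k - s) s) := fun s hs =>
    hA.of_nonneg_of_le (dzetaTerm_nonneg _ s) (dzetaTerm_le_eulerTermA (by omega) hs)
  have hBdiag := hB.hasSum.sum_antidiagonal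
  simp only [sum_antidiagonal_eulerTermB] at hBdiag
  calc ∑ s ∈ Icc 2 (k - 1), dzeta (k - s) s
      = ∑' p, ∑ s ∈ Icc 2 (k - 1), dzetaTerm (k - s) s p := by
        rw [Summable.tsum_finsetSum hterm]
        exact sum_congr rfl fun s hs => dzeta_eq_tsum (hterm s hs)
    _ = ∑' p, eulerTermA k p - ∑' p, eulerTermB k p := by
        simp_rw [sum_dzetaTerm (by omega : 2 ≤ k)]
        exact hA.tsum_sub hB
    _ = ∑' i : ℕ, (harmonic (i + 1) : ℝ) / ((i : ℝ) + 1) ^ (k - 1)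
          - ∑' n : ℕ, (harmonic (n + 1) : ℝ) / ((n : ℝ) + 2) ^ (k - 1) := by
        rw [hA.tsum_prod, hBdiag.tsum_eq]
        simp_rw [(hasSum_eulerTermA_fiber k _).tsum_eq]
    _ = zeta k := by rw [tsum_harmonic_div_pow_sub_tsum hk, zeta_eq_tsum (by omega)]
end

section
/- For an integer k ≥ 3, Σ_{s=2}^{k-1} ζ(overline{k-s}, s) = ζ(k̄) + ζ(1, overline{k-1}) - ζ(1̄, overline{k-1}). -/
open Filter Finset Real

open Topology

noncomputable def Hs (n : ℕ) : ℝ := ∑ i ∈ Finset.range n, 1/((i+1:ℝ))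
noncomputable def Ts (r n : ℕ) : ℝ := ∑ i ∈ Finset.range n, (-1:ℝ)^(i+1)/((i+1:ℝ))^r

lemma alt_bound (a : ℕ → ℝ) (ha : ∀ i, 0 ≤ a i) (hm : ∀ i, a (i+1) ≤ a i) :
    ∀ n, -a 0 ≤ (∑ i ∈ Finset.range n, (-1:ℝ)^(i+1) * a i) ∧
      (∑ i ∈ Finset.range n, (-1:ℝ)^(i+1) * a i) ≤ 0 := by
  have key : ∀ n, (-a 0 ≤ (∑ i ∈ Finset.range n, (-1:ℝ)^(i+1) * a i) ∧
      (∑ i ∈ Finset.range n, (-1:ℝ)^(i+1) * a i) ≤ 0) ∧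
      (-a 0 ≤ (∑ i ∈ Finset.range (n+1), (-1:ℝ)^(i+1) * a i) ∧
      (∑ i ∈ Finset.range (n+1), (-1:ℝ)^(i+1) * a i) ≤ 0) := by
    intro n
    induction n with
    | zero =>
      refine ⟨⟨by simp [ha 0], by simp⟩, ?_, ?_⟩
      · simp [Finset.sum_range_succ]
      · simp [Finset.sum_range_succ]
        linarith [ha 0]
    | succ n ih =>
      refine ⟨ih.2, ?_, ?_⟩
      · rcases Nat.even_or_odd n with he | ho
        · -- n even : sum(n+2) = sum(n+1) + a(n+1) ≥ sum(n+1) ≥ -a0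
          rw [Finset.sum_range_succ]
          have h2 : (-1:ℝ)^(n+1+1) = 1 := by
            rw [pow_succ, pow_succ, he.neg_one_pow]; ring
          rw [h2, one_mul]
          linarith [ih.2.1, ha (n+1)]
        · -- n odd : sum(n+2) = sum n + a n - a(n+1) ≥ sum n ≥ -a0
          rw [Finset.sum_range_succ, Finset.sum_range_succ]
          have h1 : (-1:ℝ)^(n+1) = 1 := by
            rw [pow_succ, ho.neg_one_pow]; ring
          have h2 : (-1:ℝ)^(n+1+1) = -1 := by rw [pow_succ, h1]; ring
          rw [h1, h2]
          have := hm n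
          linarith [ih.1.1]
      · rcases Nat.even_or_odd n with he | ho
        · -- n even: sum(n+2) = sum(n) - a n + a (n+1) ≤ sum n ≤ 0
          rw [Finset.sum_range_succ, Finset.sum_range_succ]
          have h1 : (-1:ℝ)^(n+1) = -1 := by
            rw [pow_succ, he.neg_one_pow]; ring
          have h2 : (-1:ℝ)^(n+1+1) = 1 := by rw [pow_succ, h1]; ring
          rw [h1, h2]
          have := hm n
          linarith [ih.1.2]
        · -- n odd: sum(n+2) = sum(n+1) - a(n+1) ≤ 0
          rw [Finset.sum_range_succ]
          have h1 : (-1:ℝ)^(n+1) = 1 := by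
            rw [pow_succ, ho.neg_one_pow]; ring
          have h2 : (-1:ℝ)^(n+1+1) = -1 := by rw [pow_succ, h1]; ring
          rw [h2]
          linarith [ih.2.2, ha (n+1)]
  exact fun n => (key n).1

lemma Ts_bound (r n : ℕ) : |Ts r n| ≤ 1 := by
  have h := alt_bound (fun i => 1/((i+1:ℝ))^r) (fun i => by positivity)
    (fun i => by
      apply one_div_le_one_div_of_le
      · positivity
      · apply pow_le_pow_left₀ (by positivity)
        push_cast; linarith) n
  rw [abs_le]
  have hT : Ts r n = ∑ i ∈ Finset.range n, (-1:ℝ)^(i+1) * (1/((i+1:ℝ))^r) := by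
    unfold Ts; apply Finset.sum_congr rfl; intro i _; ring
  rw [hT]
  refine ⟨le_trans ?_ h.1, le_trans h.2 zero_le_one⟩
  norm_num

lemma Hs_nonneg (n : ℕ) : 0 ≤ Hs n := by
  unfold Hs; positivity

lemma Hs_mono : Monotone Hs := by
  apply monotone_nat_of_le_succ
  intro n
  unfold Hs
  rw [Finset.sum_range_succ]
  have : (0:ℝ) ≤ 1/((n+1:ℝ)) := by positivity
  linarith

lemma Hs_le_sqrt (n : ℕ) : Hs n ≤ 2 * Real.sqrt n := by
  induction n with
  | zero => simp [Hs]
  | succ n ih =>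
    unfold Hs at *
    rw [Finset.sum_range_succ]
    have hs1 : Real.sqrt (n+1) * Real.sqrt (n+1) = (n:ℝ)+1 := by
      exact Real.mul_self_sqrt (by positivity)
    have hs2 : Real.sqrt n * Real.sqrt n = (n:ℝ) := by
      exact Real.mul_self_sqrt (by positivity)
    have hmono : Real.sqrt n ≤ Real.sqrt (n+1) := by
      apply Real.sqrt_le_sqrt; push_cast; linarith
    have hnn : (0:ℝ) ≤ Real.sqrt n := Real.sqrt_nonneg _
    have hnn1 : (0:ℝ) ≤ Real.sqrt (n+1) := Real.sqrt_nonneg _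
    have hle : Real.sqrt (n+1) ≤ (n:ℝ)+1 := by nlinarith
    have key : (Real.sqrt (n+1) - Real.sqrt n) * (Real.sqrt (n+1) + Real.sqrt n) = 1 := by
      nlinarith
    have hstep : 1/((n:ℝ)+1) ≤ 2 * (Real.sqrt (n+1) - Real.sqrt n) := by
      rw [div_le_iff₀ (by positivity)]
      nlinarith
    push_cast at *
    linarith

lemma pf_aux (x y : ℝ) (hx : x ≠ 0) (hy : y ≠ 0) (hd : y - x ≠ 0) (K : ℕ) :
    ∑ s ∈ Finset.Icc 2 (K+2), 1/(x^(K+3-s) * y^s)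
      = (1/x^(K+2)) * (1/(y-x) - 1/y) - 1/(y^(K+2) * (y-x)) := by
  induction K with
  | zero =>
    rw [Finset.Icc_self, Finset.sum_singleton]
    norm_num
    field_simp
    ring
  | succ K ih =>
    have hins : Finset.Icc 2 (K+3) = insert (K+3) (Finset.Icc 2 (K+2)) := by
      ext t; simp only [Finset.mem_Icc, Finset.mem_insert]; omega
    rw [hins, Finset.sum_insert (by simp)]
    have hcong : ∑ s ∈ Finset.Icc 2 (K+2), 1/(x^(K+1+3-s) * y^s)
        = ∑ s ∈ Finset.Icc 2 (K+2), (1/x) * (1/(x^(K+3-s) * y^s)) := by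
      apply Finset.sum_congr rfl
      intro s hs
      rw [Finset.mem_Icc] at hs
      have : K+1+3-s = (K+3-s)+1 := by omega
      rw [this, pow_succ]
      field_simp
    rw [hcong, ← Finset.mul_sum, ih]
    have h1 : x^(K+1+2) = x^(K+2) * x := by rw [← pow_succ]
    have h2 : y^(K+1+2) = y^(K+2) * y := by rw [← pow_succ]
    have h3 : (K+1+3-(K+3) : ℕ) = 1 := by omega
    rw [h1, h2, h3, pow_one]
    have hxk : x^(K+2) ≠ 0 := pow_ne_zero _ hx
    have hyk : y^(K+2) ≠ 0 := pow_ne_zero _ hy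
    field_simp
    ring

lemma swap_sum {M : Type*} [AddCommMonoid M] (f : ℕ → ℕ → M) (N : ℕ) :
    ∑ m ∈ Finset.range N, ∑ j ∈ Finset.range (m+1), f m j
      = ∑ j ∈ Finset.range N, ∑ m ∈ Finset.Ico j N, f m j := by
  induction N with
  | zero => simp
  | succ N ih =>
    rw [Finset.sum_range_succ, ih]
    conv_rhs => rw [Finset.sum_range_succ]
    have h0 : ∑ m ∈ Finset.Ico N (N+1), f m N = f N N := by
      rw [Finset.sum_Ico_succ_top (le_refl N), Finset.Ico_self, Finset.sum_empty, zero_add]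
    rw [h0]
    have h1 : ∀ j ∈ Finset.range N, ∑ m ∈ Finset.Ico j (N+1), f m j
        = ∑ m ∈ Finset.Ico j N, f m j + f N j := by
      intro j hj
      rw [Finset.mem_range] at hj
      rw [Finset.sum_Ico_succ_top hj.le]
    rw [Finset.sum_congr rfl h1, Finset.sum_add_distrib, Finset.sum_range_succ]
    rw [add_assoc]

lemma summable_of_le_one_div_sq (f : ℕ → ℝ) (h : ∀ m, |f m| ≤ 1/((m+1:ℝ))^2) :
    Summable f := by
  apply Summable.of_abs
  apply Summable.of_nonneg_of_le (fun m => abs_nonneg _) h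
  have hbase : Summable (fun n : ℕ => 1/(n:ℝ)^2) := by
    rw [summable_one_div_nat_pow]; omega
  have := (summable_nat_add_iff 1).2 hbase
  apply this.congr
  intro m
  push_cast
  ring_nf

lemma summable_of_le_pow32 (f : ℕ → ℝ) (C : ℝ)
    (h : ∀ m, |f m| ≤ C * (1/((m+1:ℝ))^((3:ℝ)/2))) : Summable f := by
  apply Summable.of_abs
  apply Summable.of_nonneg_of_le (fun m => abs_nonneg _) h
  have hbase : Summable (fun n : ℕ => 1/(n:ℝ)^((3:ℝ)/2)) := by
    rw [summable_one_div_nat_rpow]; norm_num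
  have h2 := (summable_nat_add_iff 1).2 hbase
  have h3 : Summable (fun m : ℕ => 1/((m+1:ℝ))^((3:ℝ)/2)) := by
    apply h2.congr; intro m; push_cast; ring_nf
  exact h3.mul_left C

lemma S1 (r s : ℕ) (hs : 2 ≤ s) :
    Summable (fun m : ℕ => (1/((m+2:ℝ))^s) * Ts r (m+1)) := by
  apply summable_of_le_one_div_sq
  intro m
  rw [abs_mul, abs_of_nonneg (by positivity : (0:ℝ) ≤ 1/((m+2:ℝ))^s)]
  have h3 : (1:ℝ)/((m+2:ℝ))^s ≤ 1/((m+1:ℝ))^2 := by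
    apply one_div_le_one_div_of_le (by positivity)
    calc ((m:ℝ)+1)^2 ≤ ((m:ℝ)+2)^2 := by nlinarith [Nat.cast_nonneg (α := ℝ) m]
      _ ≤ ((m:ℝ)+2)^s := pow_le_pow_right₀ (by linarith [Nat.cast_nonneg (α := ℝ) m]) hs
  calc (1/((m+2:ℝ))^s) * |Ts r (m+1)| ≤ (1/((m+2:ℝ))^s) * 1 := by
        apply mul_le_mul_of_nonneg_left (Ts_bound r (m+1)) (by positivity)
    _ = 1/((m+2:ℝ))^s := mul_one _
    _ ≤ 1/((m+1:ℝ))^2 := h3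

lemma SZ (k : ℕ) (hk : 2 ≤ k) :
    Summable (fun m : ℕ => (-1:ℝ)^(m+1)/((m+1:ℝ))^k) := by
  apply summable_of_le_one_div_sq
  intro m
  rw [abs_div, abs_pow, abs_neg, abs_one, one_pow,
    abs_of_nonneg (by positivity : (0:ℝ) ≤ ((m+1:ℝ))^k)]
  apply one_div_le_one_div_of_le (by positivity)
  exact pow_le_pow_right₀ (by linarith [Nat.cast_nonneg (α := ℝ) m]) hk

lemma S3 (k : ℕ) (hk : 3 ≤ k) :
    Summable (fun m : ℕ => ((-1:ℝ)^(m+2)/((m+2:ℝ))^(k-1)) * Ts 1 (m+1)) := by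
  apply summable_of_le_one_div_sq
  intro m
  rw [abs_mul, abs_div, abs_pow, abs_neg, abs_one, one_pow,
    abs_of_nonneg (by positivity : (0:ℝ) ≤ ((m+2:ℝ))^(k-1))]
  have h3 : (1:ℝ)/((m+2:ℝ))^(k-1) ≤ 1/((m+1:ℝ))^2 := by
    apply one_div_le_one_div_of_le (by positivity)
    calc ((m:ℝ)+1)^2 ≤ ((m:ℝ)+2)^2 := by nlinarith [Nat.cast_nonneg (α := ℝ) m]
      _ ≤ ((m:ℝ)+2)^(k-1) := pow_le_pow_right₀
            (by linarith [Nat.cast_nonneg (α := ℝ) m]) (by omega)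
  calc (1/((m+2:ℝ))^(k-1)) * |Ts 1 (m+1)| ≤ (1/((m+2:ℝ))^(k-1)) * 1 := by
        apply mul_le_mul_of_nonneg_left (Ts_bound 1 (m+1)) (by positivity)
    _ = 1/((m+2:ℝ))^(k-1) := mul_one _
    _ ≤ 1/((m+1:ℝ))^2 := h3

lemma S2 (k : ℕ) (hk : 3 ≤ k) :
    Summable (fun m : ℕ => ((-1:ℝ)^(m+2)/((m+2:ℝ))^(k-1)) * Hs (m+1)) := by
  apply summable_of_le_pow32 _ 2
  intro m
  rw [abs_mul, abs_div, abs_pow, abs_neg, abs_one, one_pow,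
    abs_of_nonneg (by positivity : (0:ℝ) ≤ ((m+2:ℝ))^(k-1)),
    abs_of_nonneg (Hs_nonneg _)]
  have hsq : Real.sqrt ((m:ℝ)+1) * Real.sqrt ((m:ℝ)+1) = (m:ℝ)+1 :=
    Real.mul_self_sqrt (by positivity)
  have hpos : (0:ℝ) < Real.sqrt ((m:ℝ)+1) := Real.sqrt_pos.2 (by positivity)
  have hrpow : ((m+1:ℝ))^((3:ℝ)/2) = ((m:ℝ)+1) * Real.sqrt ((m:ℝ)+1) := by
    have : ((3:ℝ)/2) = 1 + 1/2 := by norm_num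
    rw [this, Real.rpow_add (by positivity), Real.rpow_one]
    congr 1
    rw [Real.sqrt_eq_rpow]
  have hb : Hs (m+1) ≤ 2 * Real.sqrt ((m:ℝ)+1) := by
    have := Hs_le_sqrt (m+1)
    push_cast at this
    exact this
  have hden : ((m+1:ℝ))^2 ≤ ((m+2:ℝ))^(k-1) := by
    calc ((m:ℝ)+1)^2 ≤ ((m:ℝ)+2)^2 := by nlinarith [Nat.cast_nonneg (α := ℝ) m]
      _ ≤ ((m:ℝ)+2)^(k-1) := pow_le_pow_right₀
            (by linarith [Nat.cast_nonneg (α := ℝ) m]) (by omega)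
  calc (1/((m+2:ℝ))^(k-1)) * Hs (m+1)
      ≤ (1/((m+1:ℝ))^2) * (2 * Real.sqrt ((m:ℝ)+1)) := by
        apply mul_le_mul (one_div_le_one_div_of_le (by positivity) hden) hb
          (Hs_nonneg _) (by positivity)
    _ = 2 * (1/((m+1:ℝ))^((3:ℝ)/2)) := by
        rw [hrpow]
        field_simp
        nlinarith [hsq]

lemma neg_one_pow_sub (m j : ℕ) (h : j ≤ m) : (-1:ℝ)^(m-j) = (-1)^m * (-1)^j := by
  have h1 : (-1:ℝ)^(m-j) * (-1)^j = (-1)^m := by rw [← pow_add, Nat.sub_add_cancel h]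
  have h2 : ((-1:ℝ)^j) * ((-1)^j) = 1 := by
    rw [← pow_add, ← two_mul]
    exact Even.neg_one_pow ⟨j, by ring⟩
  linear_combination (-1:ℝ)^j * h1 - (-1:ℝ)^(m-j) * h2

lemma key (k : ℕ) (hk : 3 ≤ k) (N : ℕ) :
    ∑ s ∈ Finset.Icc 2 (k-1), ∑ m ∈ Finset.range N, (1/((m+2:ℝ))^s) * Ts (k-s) (m+1)
      = (∑ m ∈ Finset.range N, (-1:ℝ)^(m+1)/((m+1:ℝ))^k)
        + (∑ m ∈ Finset.range N, ((-1:ℝ)^(m+2)/((m+2:ℝ))^(k-1)) * Hs (m+1))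
        - (∑ m ∈ Finset.range N, ((-1:ℝ)^(m+2)/((m+2:ℝ))^(k-1)) * Ts 1 (m+1))
        + ((∑ j ∈ Finset.range N, ((-1:ℝ)^(j+1)/((j+1:ℝ))^(k-1)) * (Hs (N-j) - Hs (N+1)))
           + (-1:ℝ)^N * Hs N / ((N+1:ℝ))^(k-1)) := by
  obtain ⟨K, rfl⟩ : ∃ K, k = K + 3 := ⟨k-3, by omega⟩
  have hk1 : K + 3 - 1 = K + 2 := by omega
  rw [hk1]
  -- Step 1 : swap sums and factor the sign
  have step1 : ∑ s ∈ Finset.Icc 2 (K+2), ∑ m ∈ Finset.range N, (1/((m+2:ℝ))^s) * Ts (K+3-s) (m+1)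
      = ∑ m ∈ Finset.range N, ∑ j ∈ Finset.range (m+1), (-1:ℝ)^(j+1) *
        (∑ s ∈ Finset.Icc 2 (K+2), 1/(((j+1:ℝ))^(K+3-s) * ((m+2:ℝ))^s)) := by
    rw [Finset.sum_comm]
    apply Finset.sum_congr rfl
    intro m _
    unfold Ts
    calc ∑ s ∈ Finset.Icc 2 (K+2), (1/((m+2:ℝ))^s) * ∑ j ∈ Finset.range (m+1), (-1:ℝ)^(j+1)/((j+1:ℝ))^(K+3-s)
        = ∑ s ∈ Finset.Icc 2 (K+2), ∑ j ∈ Finset.range (m+1), (1/((m+2:ℝ))^s) * ((-1:ℝ)^(j+1)/((j+1:ℝ))^(K+3-s)) := by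
          apply Finset.sum_congr rfl; intro s _; rw [Finset.mul_sum]
      _ = ∑ j ∈ Finset.range (m+1), ∑ s ∈ Finset.Icc 2 (K+2), (1/((m+2:ℝ))^s) * ((-1:ℝ)^(j+1)/((j+1:ℝ))^(K+3-s)) := Finset.sum_comm
      _ = ∑ j ∈ Finset.range (m+1), (-1:ℝ)^(j+1) * (∑ s ∈ Finset.Icc 2 (K+2), 1/(((j+1:ℝ))^(K+3-s) * ((m+2:ℝ))^s)) := by
          apply Finset.sum_congr rfl; intro j _
          rw [Finset.mul_sum]
          apply Finset.sum_congr rfl; intro s _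
          ring
  -- Step 2 : partial fractions
  have step2 : ∀ m, ∀ j ∈ Finset.range (m+1),
      (∑ s ∈ Finset.Icc 2 (K+2), 1/(((j+1:ℝ))^(K+3-s) * ((m+2:ℝ))^s))
      = (1/((j+1:ℝ))^(K+2)) * (1/((m:ℝ)+1-j) - 1/((m:ℝ)+2))
        - 1/(((m+2:ℝ))^(K+2) * ((m:ℝ)+1-j)) := by
    intro m j hj
    rw [Finset.mem_range] at hj
    have hj' : (j:ℝ) ≤ (m:ℝ) := by exact_mod_cast Nat.lt_succ_iff.mp hj
    have hd : ((m:ℝ)+2) - ((j:ℝ)+1) ≠ 0 := by intro heq; linarith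
    have := pf_aux ((j:ℝ)+1) ((m:ℝ)+2) (by positivity) (by positivity) hd K
    have hyx : ((m:ℝ)+2) - ((j:ℝ)+1) = (m:ℝ)+1-(j:ℝ) := by ring
    rw [hyx] at this
    exact this
  -- rewrite with step2 and split into A - B
  have split : ∑ m ∈ Finset.range N, ∑ j ∈ Finset.range (m+1), (-1:ℝ)^(j+1) *
        (∑ s ∈ Finset.Icc 2 (K+2), 1/(((j+1:ℝ))^(K+3-s) * ((m+2:ℝ))^s))
      = (∑ m ∈ Finset.range N, ∑ j ∈ Finset.range (m+1),
          ((-1:ℝ)^(j+1)/((j+1:ℝ))^(K+2)) * (1/((m:ℝ)+1-j) - 1/((m:ℝ)+2)))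
        - (∑ m ∈ Finset.range N, ∑ j ∈ Finset.range (m+1),
          (-1:ℝ)^(j+1) * (1/(((m+2:ℝ))^(K+2) * ((m:ℝ)+1-j)))) := by
    rw [← Finset.sum_sub_distrib]
    apply Finset.sum_congr rfl
    intro m _
    rw [← Finset.sum_sub_distrib]
    apply Finset.sum_congr rfl
    intro j hj
    rw [step2 m j hj]
    ring
  -- B = f3
  have stepB : ∀ m : ℕ, (∑ j ∈ Finset.range (m+1), (-1:ℝ)^(j+1) * (1/(((m+2:ℝ))^(K+2) * ((m:ℝ)+1-j))))
      = ((-1:ℝ)^(m+2)/((m+2:ℝ))^(K+2)) * Ts 1 (m+1) := by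
    intro m
    rw [← Finset.sum_range_reflect]
    unfold Ts
    rw [Finset.mul_sum]
    apply Finset.sum_congr rfl
    intro j hj
    rw [Finset.mem_range] at hj
    have hjm : j ≤ m := Nat.lt_succ_iff.mp hj
    simp only [Nat.add_sub_cancel]
    rw [Nat.cast_sub hjm]
    have hden : (m:ℝ)+1-((m:ℝ)-(j:ℝ)) = (j:ℝ)+1 := by ring
    rw [hden]
    rw [pow_succ, neg_one_pow_sub m j hjm]
    have hne : ((j:ℝ)+1) ≠ 0 := by positivity
    have hne2 : ((m:ℝ)+2)^(K+2) ≠ 0 := by positivity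
    rw [pow_succ (-1:ℝ) (m+1), pow_succ (-1:ℝ) m, pow_succ (-1:ℝ) j, pow_one]
    field_simp
  -- A = Σ_j c_j (Hs(N-j) - (Hs(N+1) - Hs(j+1)))
  have stepA : (∑ m ∈ Finset.range N, ∑ j ∈ Finset.range (m+1),
        ((-1:ℝ)^(j+1)/((j+1:ℝ))^(K+2)) * (1/((m:ℝ)+1-j) - 1/((m:ℝ)+2)))
      = ∑ j ∈ Finset.range N, ((-1:ℝ)^(j+1)/((j+1:ℝ))^(K+2))
          * (Hs (N-j) - (Hs (N+1) - Hs (j+1))) := by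
    rw [swap_sum]
    apply Finset.sum_congr rfl
    intro j hj
    rw [Finset.mem_range] at hj
    rw [← Finset.mul_sum]
    congr 1
    rw [Finset.sum_Ico_eq_sum_range, Finset.sum_sub_distrib]
    congr 1
    · unfold Hs
      apply Finset.sum_congr rfl
      intro i _
      push_cast
      congr 1
      ring
    · have hsub : Hs (N+1) - Hs (j+1) = ∑ m ∈ Finset.Ico (j+1) (N+1), 1/((m+1:ℝ)) := by
        unfold Hs
        rw [Finset.sum_Ico_eq_sub _ (by omega)]
      rw [hsub, Finset.sum_Ico_eq_sum_range]
      have hnum : N+1-(j+1) = N-j := by omega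
      rw [hnum]
      apply Finset.sum_congr rfl
      intro i _
      push_cast
      ring_nf
  -- split A further
  have stepA2 : (∑ j ∈ Finset.range N, ((-1:ℝ)^(j+1)/((j+1:ℝ))^(K+2))
          * (Hs (N-j) - (Hs (N+1) - Hs (j+1))))
      = (∑ j ∈ Finset.range N, ((-1:ℝ)^(j+1)/((j+1:ℝ))^(K+2)) * (Hs (N-j) - Hs (N+1)))
        + (∑ j ∈ Finset.range N, ((-1:ℝ)^(j+1)/((j+1:ℝ))^(K+2)) * Hs (j+1)) := by
    rw [← Finset.sum_add_distrib]
    apply Finset.sum_congr rfl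
    intro j _
    ring
  -- Σ_j c_j Hs(j+1) = fZ + (f2 - boundary)
  have step6 : (∑ j ∈ Finset.range N, ((-1:ℝ)^(j+1)/((j+1:ℝ))^(K+2)) * Hs (j+1))
      = (∑ m ∈ Finset.range N, (-1:ℝ)^(m+1)/((m+1:ℝ))^(K+3))
        + ((∑ m ∈ Finset.range N, ((-1:ℝ)^(m+2)/((m+2:ℝ))^(K+2)) * Hs (m+1))
           - ((-1:ℝ)^(N+1)/((N+1:ℝ))^(K+2)) * Hs N) := by
    have e1 : (∑ j ∈ Finset.range N, ((-1:ℝ)^(j+1)/((j+1:ℝ))^(K+2)) * Hs (j+1))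
        = (∑ j ∈ Finset.range N, ((-1:ℝ)^(j+1)/((j+1:ℝ))^(K+2)) * Hs j)
          + (∑ j ∈ Finset.range N, (-1:ℝ)^(j+1)/((j+1:ℝ))^(K+3)) := by
      rw [← Finset.sum_add_distrib]
      apply Finset.sum_congr rfl
      intro j _
      have : Hs (j+1) = Hs j + 1/((j+1:ℝ)) := by
        unfold Hs; rw [Finset.sum_range_succ]
      rw [this]
      have hne : ((j:ℝ)+1) ≠ 0 := by positivity
      rw [pow_succ ((j:ℝ)+1) (K+2)]
      field_simp
    have e2 : (∑ j ∈ Finset.range N, ((-1:ℝ)^(j+1)/((j+1:ℝ))^(K+2)) * Hs j)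
        = (∑ m ∈ Finset.range N, ((-1:ℝ)^(m+2)/((m+2:ℝ))^(K+2)) * Hs (m+1))
          - ((-1:ℝ)^(N+1)/((N+1:ℝ))^(K+2)) * Hs N := by
      set F : ℕ → ℝ := fun j => ((-1:ℝ)^(j+1)/((j+1:ℝ))^(K+2)) * Hs j with hF
      have hF0 : F 0 = 0 := by simp [hF, Hs]
      have h1 : ∑ j ∈ Finset.range (N+1), F j = ∑ j ∈ Finset.range N, F (j+1) + F 0 :=
        Finset.sum_range_succ' F N
      have h2 : ∑ j ∈ Finset.range (N+1), F j = ∑ j ∈ Finset.range N, F j + F N :=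
        Finset.sum_range_succ F N
      have h3 : ∑ j ∈ Finset.range N, F (j+1)
          = ∑ m ∈ Finset.range N, ((-1:ℝ)^(m+2)/((m+2:ℝ))^(K+2)) * Hs (m+1) := by
        apply Finset.sum_congr rfl
        intro m _
        simp only [hF]
        push_cast
        ring_nf
      have hFN : F N = ((-1:ℝ)^(N+1)/((N+1:ℝ))^(K+2)) * Hs N := rfl
      rw [← h3, ← hFN]
      linarith [h1, h2, hF0]
    rw [e1, e2]
    ring
  -- assemble
  rw [step1, split, stepA, stepA2, step6]
  have hB : (∑ m ∈ Finset.range N, ∑ j ∈ Finset.range (m+1),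
        (-1:ℝ)^(j+1) * (1/(((m+2:ℝ))^(K+2) * ((m:ℝ)+1-j))))
      = ∑ m ∈ Finset.range N, ((-1:ℝ)^(m+2)/((m+2:ℝ))^(K+2)) * Ts 1 (m+1) :=
    Finset.sum_congr rfl (fun m _ => stepB m)
  rw [hB]
  have hbd : ((-1:ℝ)^(N+1)/((N+1:ℝ))^(K+2)) * Hs N = -((-1:ℝ)^N * Hs N / ((N+1:ℝ))^(K+2)) := by
    rw [pow_succ]
    ring
  rw [hbd]
  ring

lemma Ebound (k : ℕ) (hk : 3 ≤ k) (N : ℕ) :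
    |(∑ j ∈ Finset.range N, ((-1:ℝ)^(j+1)/((j+1:ℝ))^(k-1)) * (Hs (N-j) - Hs (N+1)))
      + (-1:ℝ)^N * Hs N / ((N+1:ℝ))^(k-1)| ≤ 6 / Real.sqrt ((N:ℝ)+1) := by
  set s := Real.sqrt ((N:ℝ)+1) with hs
  have hspos : 0 < s := Real.sqrt_pos.2 (by positivity)
  have hss : s * s = (N:ℝ)+1 := Real.mul_self_sqrt (by positivity)
  have hHN1 : Hs (N+1) ≤ 2 * s := by
    have := Hs_le_sqrt (N+1)
    push_cast at this
    exact this
  have hHN : Hs N ≤ 2 * s := le_trans (Hs_mono (Nat.le_succ N)) hHN1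
  -- (1) increment bound
  have h1 : ∀ j, j < N → Hs (N+1) - Hs (N-j) ≤ ((j:ℝ)+1) * (1/(((N-j:ℕ):ℝ)+1)) := by
    intro j hj
    have hle : N - j ≤ N + 1 := by omega
    have heq : Hs (N+1) - Hs (N-j) = ∑ i ∈ Finset.Ico (N-j) (N+1), 1/((i+1:ℝ)) := by
      unfold Hs
      rw [Finset.sum_Ico_eq_sub _ hle]
    rw [heq]
    have hcard : (Finset.Ico (N-j) (N+1)).card = j+1 := by rw [Nat.card_Ico]; omega
    have hb : ∀ i ∈ Finset.Ico (N-j) (N+1), 1/((i+1:ℝ)) ≤ 1/(((N-j:ℕ):ℝ)+1) := by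
      intro i hi
      rw [Finset.mem_Ico] at hi
      apply one_div_le_one_div_of_le (by positivity)
      have : ((N-j:ℕ):ℝ) ≤ (i:ℝ) := Nat.cast_le.2 hi.1
      linarith
    calc ∑ i ∈ Finset.Ico (N-j) (N+1), 1/((i+1:ℝ))
        ≤ (Finset.Ico (N-j) (N+1)).card • (1/(((N-j:ℕ):ℝ)+1)) :=
          Finset.sum_le_card_nsmul _ _ _ hb
      _ = ((j:ℝ)+1) * (1/(((N-j:ℕ):ℝ)+1)) := by
          rw [hcard, nsmul_eq_mul]
          push_cast
          ring
  -- (2) per-term bound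
  have h2 : ∀ j ∈ Finset.range N,
      |((-1:ℝ)^(j+1)/((j+1:ℝ))^(k-1)) * (Hs (N-j) - Hs (N+1))|
        ≤ (1/((N:ℝ)+2)) * (1/((j:ℝ)+1) + 1/(((N-j:ℕ):ℝ)+1)) := by
    intro j hj
    rw [Finset.mem_range] at hj
    have hjR : (j:ℝ) ≤ (N:ℝ) := Nat.cast_le.2 hj.le
    have hd : ((N-j:ℕ):ℝ) = (N:ℝ) - j := Nat.cast_sub hj.le
    have hmono : Hs (N-j) ≤ Hs (N+1) := Hs_mono (by omega)
    have habs : |((-1:ℝ)^(j+1)/((j+1:ℝ))^(k-1)) * (Hs (N-j) - Hs (N+1))|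
        = (1/((j+1:ℝ))^(k-1)) * (Hs (N+1) - Hs (N-j)) := by
      rw [abs_mul, abs_div, abs_pow, abs_neg, abs_one, one_pow,
        abs_of_nonneg (by positivity : (0:ℝ) ≤ ((j+1:ℝ))^(k-1)),
        abs_of_nonpos (by linarith : Hs (N-j) - Hs (N+1) ≤ 0)]
      ring
    rw [habs]
    have hpow : (1:ℝ)/((j+1:ℝ))^(k-1) ≤ 1/((j+1:ℝ))^2 := by
      apply one_div_le_one_div_of_le (by positivity)
      apply pow_le_pow_right₀ (by linarith [Nat.cast_nonneg (α := ℝ) j]) (by omega)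
    have hincr := h1 j hj
    have hprod : (1/((j+1:ℝ))^(k-1)) * (Hs (N+1) - Hs (N-j))
        ≤ (1/((j+1:ℝ))^2) * (((j:ℝ)+1) * (1/(((N-j:ℕ):ℝ)+1))) := by
      apply mul_le_mul hpow hincr (by linarith) (by positivity)
    apply le_trans hprod
    rw [hd]
    have hx : ((j:ℝ)+1) ≠ 0 := by positivity
    have hdpos : (0:ℝ) < (N:ℝ) - j + 1 := by linarith
    have hN2 : (0:ℝ) < (N:ℝ) + 2 := by positivity
    rw [le_iff_eq_or_lt]
    left
    field_simp
    ring
  -- (3) bound the sum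
  have h3 : |∑ j ∈ Finset.range N, ((-1:ℝ)^(j+1)/((j+1:ℝ))^(k-1)) * (Hs (N-j) - Hs (N+1))|
      ≤ 4 / s := by
    calc |∑ j ∈ Finset.range N, ((-1:ℝ)^(j+1)/((j+1:ℝ))^(k-1)) * (Hs (N-j) - Hs (N+1))|
        ≤ ∑ j ∈ Finset.range N, |((-1:ℝ)^(j+1)/((j+1:ℝ))^(k-1)) * (Hs (N-j) - Hs (N+1))| :=
          Finset.abs_sum_le_sum_abs _ _
      _ ≤ ∑ j ∈ Finset.range N, (1/((N:ℝ)+2)) * (1/((j:ℝ)+1) + 1/(((N-j:ℕ):ℝ)+1)) :=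
          Finset.sum_le_sum h2
      _ = (1/((N:ℝ)+2)) * ((∑ j ∈ Finset.range N, 1/((j:ℝ)+1))
            + ∑ j ∈ Finset.range N, 1/(((N-j:ℕ):ℝ)+1)) := by
          rw [← Finset.mul_sum, Finset.sum_add_distrib]
      _ ≤ (1/((N:ℝ)+2)) * (2 * s + 2 * s) := by
          apply mul_le_mul_of_nonneg_left _ (by positivity)
          have e1 : (∑ j ∈ Finset.range N, 1/((j:ℝ)+1)) = Hs N := rfl
          have e2 : ∑ j ∈ Finset.range N, 1/(((N-j:ℕ):ℝ)+1)
              = ∑ i ∈ Finset.range N, 1/((i:ℝ)+2) := by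
            rw [← Finset.sum_range_reflect (fun i => 1/((i:ℝ)+2)) N]
            apply Finset.sum_congr rfl
            intro j hj
            rw [Finset.mem_range] at hj
            congr 1
            have : N - j = (N-1-j)+1 := by omega
            rw [this]
            push_cast
            ring
          have e3 : ∑ i ∈ Finset.range N, 1/((i:ℝ)+2) ≤ Hs (N+1) := by
            have : Hs (N+1) = (∑ i ∈ Finset.range N, 1/((i:ℝ)+2)) + 1 := by
              unfold Hs
              rw [Finset.sum_range_succ' (fun i => 1/((i:ℝ)+1)) N]
              norm_num
              apply Finset.sum_congr rfl
              intro i _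
              push_cast
              ring_nf
            linarith
          rw [e1, e2]
          linarith
      _ ≤ 4 / s := by
          have he : 1/((N:ℝ)+2) * (2*s + 2*s) = (4*s)/((N:ℝ)+2) := by ring
          rw [he, div_le_div_iff₀ (by positivity) hspos]
          nlinarith
  -- (4) boundary term
  have h4 : |(-1:ℝ)^N * Hs N / ((N+1:ℝ))^(k-1)| ≤ 2 / s := by
    rw [abs_div, abs_mul, abs_pow, abs_neg, abs_one, one_pow, one_mul,
      abs_of_nonneg (Hs_nonneg N),
      abs_of_nonneg (by positivity : (0:ℝ) ≤ ((N+1:ℝ))^(k-1))]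
    have hpow : ((N:ℝ)+1)^2 ≤ ((N+1:ℝ))^(k-1) := by
      apply pow_le_pow_right₀ (by linarith [Nat.cast_nonneg (α := ℝ) N]) (by omega)
    calc Hs N / ((N+1:ℝ))^(k-1) ≤ (2*s) / ((N:ℝ)+1)^2 := by
          apply div_le_div₀ (by positivity) hHN (by positivity) hpow
      _ ≤ 2 / s := by
          rw [div_le_div_iff₀ (by positivity) hspos]
          nlinarith
  calc |(∑ j ∈ Finset.range N, ((-1:ℝ)^(j+1)/((j+1:ℝ))^(k-1)) * (Hs (N-j) - Hs (N+1)))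
      + (-1:ℝ)^N * Hs N / ((N+1:ℝ))^(k-1)|
      ≤ |∑ j ∈ Finset.range N, ((-1:ℝ)^(j+1)/((j+1:ℝ))^(k-1)) * (Hs (N-j) - Hs (N+1))|
        + |(-1:ℝ)^N * Hs N / ((N+1:ℝ))^(k-1)| := abs_add_le _ _
    _ ≤ 4 / s + 2 / s := add_le_add h3 h4
    _ = 6 / s := by ring

lemma Etendsto (k : ℕ) (hk : 3 ≤ k) :
    Tendsto (fun N : ℕ => (∑ j ∈ Finset.range N, ((-1:ℝ)^(j+1)/((j+1:ℝ))^(k-1)) * (Hs (N-j) - Hs (N+1)))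
      + (-1:ℝ)^N * Hs N / ((N+1:ℝ))^(k-1)) atTop (𝓝 0) := by
  apply squeeze_zero_norm (fun N => Ebound k hk N)
  have h0 : Tendsto (fun N : ℕ => 1/((N:ℝ)+1)) atTop (𝓝 0) :=
    tendsto_one_div_add_atTop_nhds_zero_nat
  have h3 : Tendsto (fun N : ℕ => Real.sqrt (1/((N:ℝ)+1))) atTop (𝓝 0) := by
    have := h0.sqrt
    rwa [Real.sqrt_zero] at this
  have h4 : Tendsto (fun N : ℕ => 6 * Real.sqrt (1/((N:ℝ)+1))) atTop (𝓝 (6 * 0)) :=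
    h3.const_mul 6
  rw [mul_zero] at h4
  apply h4.congr
  intro N
  rw [one_div, Real.sqrt_inv, ← one_div]
  ring

theorem alt_sum_formula_1 (k : ℕ) (hk : 3 ≤ k) :
    ∑ s ∈ Finset.Icc 2 (k-1), dzetaA1 (k-s) s
      = zetaA k + dzetaA2 1 (k-1) - dzetaA3 1 (k-1) := by
  have hS1 : ∀ s ∈ Finset.Icc 2 (k-1),
      Summable (fun m : ℕ => (1/((m+2:ℝ))^s) * Ts (k-s) (m+1)) := by
    intro s hs
    rw [Finset.mem_Icc] at hs
    exact S1 (k-s) s hs.1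
  have hSZ := SZ k (by omega)
  have hS2 := S2 k hk
  have hS3 := S3 k hk
  -- identify limUnder values
  have hd1 : ∀ s ∈ Finset.Icc 2 (k-1),
      dzetaA1 (k-s) s = ∑' (m : ℕ), (1/((m+2:ℝ))^s) * Ts (k-s) (m+1) := by
    intro s hs
    unfold dzetaA1
    have hfun : (fun N => ∑ m ∈ Finset.range N,
        (1/((m+2:ℝ))^s) * ∑ j ∈ Finset.range (m+1), (-1:ℝ)^(j+1)/((j+1:ℝ))^(k-s))
        = fun N => ∑ m ∈ Finset.range N, (1/((m+2:ℝ))^s) * Ts (k-s) (m+1) := rfl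
    rw [hfun]
    exact ((hS1 s hs).hasSum.tendsto_sum_nat).limUnder_eq
  have hdZ : zetaA k = ∑' (m : ℕ), (-1:ℝ)^(m+1)/((m+1:ℝ))^k := by
    unfold zetaA
    rw [if_neg (by omega)]
    exact (hSZ.hasSum.tendsto_sum_nat).limUnder_eq
  have hd2 : dzetaA2 1 (k-1) = ∑' (m : ℕ), ((-1:ℝ)^(m+2)/((m+2:ℝ))^(k-1)) * Hs (m+1) := by
    unfold dzetaA2
    have hfun : (fun N => ∑ m ∈ Finset.range N,
        ((-1:ℝ)^(m+2)/((m+2:ℝ))^(k-1)) * ∑ j ∈ Finset.range (m+1), 1/((j+1:ℝ))^1)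
        = fun N => ∑ m ∈ Finset.range N, ((-1:ℝ)^(m+2)/((m+2:ℝ))^(k-1)) * Hs (m+1) := by
      funext N
      apply Finset.sum_congr rfl
      intro m _
      congr 1
      unfold Hs
      apply Finset.sum_congr rfl
      intro j _
      rw [pow_one]
    rw [hfun]
    exact (hS2.hasSum.tendsto_sum_nat).limUnder_eq
  have hd3 : dzetaA3 1 (k-1) = ∑' (m : ℕ), ((-1:ℝ)^(m+2)/((m+2:ℝ))^(k-1)) * Ts 1 (m+1) := by
    unfold dzetaA3
    have hfun : (fun N => ∑ m ∈ Finset.range N,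
        ((-1:ℝ)^(m+2)/((m+2:ℝ))^(k-1)) * ∑ j ∈ Finset.range (m+1), (-1:ℝ)^(j+1)/((j+1:ℝ))^1)
        = fun N => ∑ m ∈ Finset.range N, ((-1:ℝ)^(m+2)/((m+2:ℝ))^(k-1)) * Ts 1 (m+1) := rfl
    rw [hfun]
    exact (hS3.hasSum.tendsto_sum_nat).limUnder_eq
  -- limits of partial sums
  have hT1 : Tendsto (fun N => ∑ s ∈ Finset.Icc 2 (k-1),
      ∑ m ∈ Finset.range N, (1/((m+2:ℝ))^s) * Ts (k-s) (m+1)) atTop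
      (𝓝 (∑ s ∈ Finset.Icc 2 (k-1), ∑' (m : ℕ), (1/((m+2:ℝ))^s) * Ts (k-s) (m+1))) :=
    tendsto_finset_sum _ (fun s hs => ((hS1 s hs).hasSum.tendsto_sum_nat))
  have hTR : Tendsto (fun N =>
      (∑ m ∈ Finset.range N, (-1:ℝ)^(m+1)/((m+1:ℝ))^k)
        + (∑ m ∈ Finset.range N, ((-1:ℝ)^(m+2)/((m+2:ℝ))^(k-1)) * Hs (m+1))
        - (∑ m ∈ Finset.range N, ((-1:ℝ)^(m+2)/((m+2:ℝ))^(k-1)) * Ts 1 (m+1))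
        + ((∑ j ∈ Finset.range N, ((-1:ℝ)^(j+1)/((j+1:ℝ))^(k-1)) * (Hs (N-j) - Hs (N+1)))
           + (-1:ℝ)^N * Hs N / ((N+1:ℝ))^(k-1))) atTop
      (𝓝 ((∑' (m : ℕ), (-1:ℝ)^(m+1)/((m+1:ℝ))^k)
        + (∑' (m : ℕ), ((-1:ℝ)^(m+2)/((m+2:ℝ))^(k-1)) * Hs (m+1))
        - (∑' (m : ℕ), ((-1:ℝ)^(m+2)/((m+2:ℝ))^(k-1)) * Ts 1 (m+1)) + 0)) := by
    apply Tendsto.add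
    · apply Tendsto.sub
      · exact (hSZ.hasSum.tendsto_sum_nat).add (hS2.hasSum.tendsto_sum_nat)
      · exact hS3.hasSum.tendsto_sum_nat
    · exact Etendsto k hk
  have hTR' : Tendsto (fun N => ∑ s ∈ Finset.Icc 2 (k-1),
      ∑ m ∈ Finset.range N, (1/((m+2:ℝ))^s) * Ts (k-s) (m+1)) atTop
      (𝓝 ((∑' (m : ℕ), (-1:ℝ)^(m+1)/((m+1:ℝ))^k)
        + (∑' (m : ℕ), ((-1:ℝ)^(m+2)/((m+2:ℝ))^(k-1)) * Hs (m+1))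
        - (∑' (m : ℕ), ((-1:ℝ)^(m+2)/((m+2:ℝ))^(k-1)) * Ts 1 (m+1)) + 0)) := by
    apply hTR.congr
    intro N
    exact (key k hk N).symm
  have hmain := tendsto_nhds_unique hT1 hTR'
  rw [Finset.sum_congr rfl hd1, hdZ, hd2, hd3, hmain, add_zero]
end

section
/- For nonnegative integers a, b, the multiple zeta star value satisfies H*(a, b) = -4 ζ(2a+1, overline{2b+2}) - 2 ζ(overline{2a+2b+3}), where H*(a,b) = ζ*(2,…,2,3,2,…,2) with a twos before the 3 and b twos after. -/
open Filter Finset Real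

/-- Multiple zeta star value `ζ*(k₁,…,k_n) = Σ_{1 ≤ m₁ ≤ … ≤ m_n} ∏ 1/m_i^{k_i}`. -/
noncomputable def mzvStar (n : ℕ) (k : Fin n → ℕ) : ℝ :=
  ∑' m : {f : Fin n → ℕ+ // Monotone f}, ∏ i, (1 : ℝ)/((m.1 i : ℝ))^(k i)

/-- Multiple zeta value `ζ(k₁,…,k_n) = Σ_{1 ≤ m₁ < … < m_n} ∏ 1/m_i^{k_i}`. -/
noncomputable def mzv (n : ℕ) (k : Fin n → ℕ) : ℝ :=
  ∑' m : {f : Fin n → ℕ+ // StrictMono f}, ∏ i, (1 : ℝ)/((m.1 i : ℝ))^(k i)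

/-- The exponent string `(2,…,2,3,2,…,2)` with `a` twos before the `3` and `b` twos after. -/
def expo232 (a b : ℕ) : Fin (a+b+1) → ℕ := fun i => if (i : ℕ) = a then 3 else 2

/-- `H*(a,b) = ζ*(2^a, 3, 2^b)`. -/
noncomputable def Hstar (a b : ℕ) : ℝ := mzvStar (a+b+1) (expo232 a b)

/-- `H*(n) = ζ*(2^n)` (so `H*(0) = 1`). -/
noncomputable def HstarN (n : ℕ) : ℝ := mzvStar n (fun _ => 2)

/-- `H(a,b) = ζ(2^a, 3, 2^b)`. -/
noncomputable def Hmzv (a b : ℕ) : ℝ := mzv (a+b+1) (expo232 a b)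

/-- `H(n) = ζ(2^n)` (so `H(0) = 1`). -/
noncomputable def HmzvN (n : ℕ) : ℝ := mzv n (fun _ => 2)

/-!
Truncate `H*(a,b)` at `m_{a+b+1} ≤ N`. With the weights `A(m,N) = C(2N,N+m)/C(2N,N)`, the
truncations have closed forms `ζ*_{≤N}(2^a) = Σ_{x<N} 2(-1)^x A(x+1,N)/(x+1)^{2a}` and
`H*_{≤N}(a,b) = Σ_{x<N} (-1)^x A(x+1,N) t_{a,b}(x)` for an explicit `t_{a,b}`. Both follow by
induction on `N` from `A(m,N+1)((N+1)^2 - m^2) = A(m,N)(N+1)^2`; passing from `2^a` to `(2^a,3)` is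
an Abel summation that uses the explicit tails of `Σ (-1)^x A(x+1,N)`. Since `0 ≤ A ≤ 1` and
`A(m,N) → 1`, dominated convergence gives `H*(a,b) = Σ_x (-1)^x t_{a,b}(x)`, and this series is the
right-hand side.
-/

open Topology

/-- `binomRatio m N = C(2N, N+m) / C(2N, N)`; it vanishes for `m > N`. -/
noncomputable def binomRatio (m N : ℕ) : ℝ := ∏ j ∈ range m, ((N : ℝ) - j) / (N + j + 1)

@[simp] lemma binomRatio_zero_left (N : ℕ) : binomRatio 0 N = 1 := prod_range_zero _

lemma binomRatio_succ_left (m N : ℕ) :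
    binomRatio (m + 1) N = binomRatio m N * (((N : ℝ) - m) / (N + m + 1)) :=
  prod_range_succ _ _

lemma binomRatio_succ_left_mul (m N : ℕ) :
    binomRatio (m + 1) N * (N + m + 1) = binomRatio m N * ((N : ℝ) - m) := by
  rw [binomRatio_succ_left, mul_assoc, div_mul_cancel₀ _ (by positivity)]

lemma binomRatio_eq_zero {m N : ℕ} (h : N < m) : binomRatio m N = 0 :=
  prod_eq_zero (mem_range.2 h) (by simp)

lemma binomRatio_nonneg (m N : ℕ) : 0 ≤ binomRatio m N := by
  rcases le_or_gt m N with h | h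
  · refine prod_nonneg fun j hj => div_nonneg ?_ (by positivity)
    have : (j : ℝ) ≤ N := by exact_mod_cast (mem_range.1 hj).le.trans h
    linarith
  · rw [binomRatio_eq_zero h]

lemma binomRatio_le_one (m N : ℕ) : binomRatio m N ≤ 1 := by
  induction m with
  | zero => simp
  | succ m ih =>
    have hN : (0 : ℝ) < N + m + 1 := by positivity
    have key := binomRatio_succ_left_mul m N
    nlinarith [binomRatio_nonneg m N, binomRatio_nonneg (m + 1) N, (m.cast_nonneg : (0 : ℝ) ≤ m)]

lemma binomRatio_succ_right (m N : ℕ) :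
    binomRatio m (N + 1) * (((N : ℝ) + 1) ^ 2 - m ^ 2) = binomRatio m N * ((N : ℝ) + 1) ^ 2 := by
  induction m with
  | zero => simp
  | succ m ih =>
    rw [binomRatio_succ_left m (N + 1), binomRatio_succ_left m N,
      mul_right_comm _ _ (((N : ℝ) + 1) ^ 2), ← ih]
    push_cast
    field_simp
    ring

lemma tendsto_binomRatio (m : ℕ) : Tendsto (binomRatio m) atTop (𝓝 1) := by
  rw [← prod_const_one (s := range m)]
  refine tendsto_finsetProd _ fun j _ => ?_
  have h := ((tendsto_natCast_div_add_atTop ((j : ℝ) + 1)).sub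
    ((tendsto_const_div_atTop_nhds_zero_nat (j : ℝ)).mul
      (tendsto_natCast_div_add_atTop ((j : ℝ) + 1))))
  rw [zero_mul, sub_zero] at h
  refine h.congr' ((eventually_gt_atTop 0).mono fun N hN => ?_)
  have : (N : ℝ) ≠ 0 := by positivity
  field_simp
  ring

noncomputable def altBinomSum (t : ℕ → ℝ) (N : ℕ) : ℝ :=
  ∑ x ∈ range N, (-1) ^ x * binomRatio (x + 1) N * t x

lemma altBinomSum_succ (t : ℕ → ℝ) (N : ℕ) :
    altBinomSum t (N + 1) = altBinomSum t N +
      altBinomSum (fun x => ((x : ℝ) + 1) ^ 2 * t x) (N + 1) / ((N : ℝ) + 1) ^ 2 := by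
  have hlast : altBinomSum t N = ∑ x ∈ range (N + 1), (-1) ^ x * binomRatio (x + 1) N * t x := by
    rw [sum_range_succ, binomRatio_eq_zero N.lt_succ_self]
    simp [altBinomSum]
  rw [hlast, altBinomSum, altBinomSum, sum_div, ← sum_add_distrib]
  refine sum_congr rfl fun x _ => ?_
  have key : binomRatio (x + 1) (N + 1) = binomRatio (x + 1) N +
      binomRatio (x + 1) (N + 1) * ((x : ℝ) + 1) ^ 2 / ((N : ℝ) + 1) ^ 2 := by
    have h := binomRatio_succ_right (x + 1) N
    push_cast at h
    field_simp
    linear_combination h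
  linear_combination (-1) ^ x * t x * key

lemma eq_altBinomSum_of_succ {S t : ℕ → ℝ} (h0 : S 0 = 0)
    (hsucc : ∀ N, S (N + 1) = S N +
      altBinomSum (fun x => ((x : ℝ) + 1) ^ 2 * t x) (N + 1) / ((N : ℝ) + 1) ^ 2) :
    S = altBinomSum t := by
  funext N
  induction N with
  | zero => simp [h0, altBinomSum]
  | succ N ih => rw [hsucc, ih, altBinomSum_succ t N]

lemma sum_Ico_neg_one_pow_mul_binomRatio (t N : ℕ) :
    ∑ x ∈ Ico t N, (-1) ^ x * binomRatio (x + 1) N =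
      (-1) ^ t * binomRatio t N * ((N : ℝ) - t) / (2 * N) := by
  rcases Nat.eq_zero_or_pos N with rfl | hN
  · simp
  set g : ℕ → ℝ := fun x => (-1) ^ x * binomRatio x N * ((N : ℝ) - x) / (2 * N)
  have htel : ∀ x, (-1) ^ x * binomRatio (x + 1) N = g x - g (x + 1) := by
    intro x
    have key := binomRatio_succ_left_mul x N
    have : (N : ℝ) ≠ 0 := by positivity
    simp only [g]
    push_cast at key ⊢
    field_simp
    linear_combination (-1) ^ x * key
  rcases le_or_gt t N with h | h
  · simp only [sum_Ico_eq_sub _ h, htel, sum_range_sub']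
    simp [g]
  · rw [Ico_eq_empty_of_le h.le, sum_empty, binomRatio_eq_zero h]
    simp

lemma altBinomSum_const (c : ℝ) {N : ℕ} (hN : 0 < N) : altBinomSum (fun _ => c) N = c / 2 := by
  have h := sum_Ico_neg_one_pow_mul_binomRatio 0 N
  have : (N : ℝ) ≠ 0 := by positivity
  simp only [← range_eq_Ico, pow_zero, binomRatio_zero_left, Nat.cast_zero, sub_zero] at h
  rw [altBinomSum, ← sum_mul, h]
  field_simp

/-- Abel summation: the tails of `Σ (-1)^x binomRatio (x+1) N` are explicit
(`sum_Ico_neg_one_pow_mul_binomRatio`). -/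
lemma altBinomSum_add_partialSum (u : ℕ → ℝ) {N : ℕ} (hN : 0 < N) :
    altBinomSum (fun x => 2 * u x + 4 * ∑ y ∈ range x, u y) N =
      altBinomSum (fun x => 2 * ((x : ℝ) + 1) * u x) N / N := by
  have hswap : ∑ x ∈ range N, (-1) ^ x * binomRatio (x + 1) N * ∑ y ∈ range x, u y =
      ∑ y ∈ range N, u y * ∑ x ∈ Ico (y + 1) N, (-1) ^ x * binomRatio (x + 1) N := by
    simp_rw [mul_sum]
    rw [sum_comm' (t' := range N) (s' := fun y => Ico (y + 1) N)
      (fun x y => by simp only [mem_range, mem_Ico]; omega)]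
    exact sum_congr rfl fun _ _ => sum_congr rfl fun _ _ => by ring
  have hN' : (N : ℝ) ≠ 0 := by positivity
  calc altBinomSum (fun x => 2 * u x + 4 * ∑ y ∈ range x, u y) N
      = ∑ x ∈ range N, (-1) ^ x * binomRatio (x + 1) N * (2 * u x) +
          4 * ∑ y ∈ range N, u y * ∑ x ∈ Ico (y + 1) N, (-1) ^ x * binomRatio (x + 1) N := by
        rw [← hswap, mul_sum, ← sum_add_distrib]
        exact sum_congr rfl fun _ _ => by ring
    _ = altBinomSum (fun x => 2 * ((x : ℝ) + 1) * u x) N / N := by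
        simp only [sum_Ico_neg_one_pow_mul_binomRatio, mul_sum, altBinomSum, sum_div,
          ← sum_add_distrib]
        refine sum_congr rfl fun x _ => ?_
        push_cast
        field_simp
        ring

lemma tendsto_altBinomSum {t : ℕ → ℝ} (ht : Summable fun x => ‖t x‖) :
    Tendsto (altBinomSum t) atTop (𝓝 (∑' x, (-1) ^ x * t x)) := by
  have hsum : ∀ N, altBinomSum t N = ∑' x, (-1) ^ x * binomRatio (x + 1) N * t x := fun N =>
    (tsum_eq_sum fun x hx => by
      rw [binomRatio_eq_zero (by simpa using hx), mul_zero, zero_mul]).symm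
  simp only [funext hsum]
  refine tendsto_tsum_of_dominated_convergence ht (fun x => ?_) (.of_forall fun N x => ?_)
  · simpa using ((tendsto_binomRatio (x + 1)).const_mul ((-1) ^ x)).mul_const (t x)
  · rw [norm_mul, norm_mul, norm_pow, norm_neg, norm_one, one_pow, one_mul,
      Real.norm_of_nonneg (binomRatio_nonneg _ _)]
    exact mul_le_of_le_one_left (norm_nonneg _) (binomRatio_le_one _ _)

lemma finite_setOf_monotone_le (n M : ℕ) :
    {g : {f : Fin n → ℕ+ // Monotone f} | ∀ i, (g.1 i : ℕ) ≤ M}.Finite := by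
  have hinj : Function.Injective fun (g : {f : Fin n → ℕ+ // Monotone f}) i => (g.1 i : ℕ) :=
    fun g g' h => Subtype.ext (funext fun i => PNat.coe_injective (congrFun h i))
  exact ((Set.Finite.pi fun _ => Set.finite_Iic M).preimage hinj.injOn).subset
    fun g hg i _ => hg i

noncomputable def monotoneTuplesLE (n M : ℕ) : Finset {f : Fin n → ℕ+ // Monotone f} :=
  (finite_setOf_monotone_le n M).toFinset

lemma mem_monotoneTuplesLE {n M : ℕ} {g : {f : Fin n → ℕ+ // Monotone f}} :
    g ∈ monotoneTuplesLE n M ↔ ∀ i, (g.1 i : ℕ) ≤ M :=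
  Set.Finite.mem_toFinset _

noncomputable def mzvStarTrunc (n : ℕ) (k : Fin n → ℕ) (M : ℕ) : ℝ :=
  ∑ g ∈ monotoneTuplesLE n M, ∏ i, (1 : ℝ) / ((g.1 i : ℝ)) ^ (k i)

lemma mzvStarTrunc_zero_length (k : Fin 0 → ℕ) (M : ℕ) : mzvStarTrunc 0 k M = 1 := by
  have g₀ : {f : Fin 0 → ℕ+ // Monotone f} := ⟨finZeroElim, fun i => i.elim0⟩
  have : monotoneTuplesLE 0 M = {g₀} := eq_singleton_iff_unique_mem.2
    ⟨mem_monotoneTuplesLE.2 finZeroElim, fun g _ => Subtype.ext (funext finZeroElim)⟩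
  simp [mzvStarTrunc, this]

lemma mzvStarTrunc_zero (n : ℕ) (k : Fin (n + 1) → ℕ) : mzvStarTrunc (n + 1) k 0 = 0 := by
  have : monotoneTuplesLE (n + 1) 0 = ∅ := eq_empty_of_forall_notMem fun g hg =>
    (g.1 0).ne_zero (Nat.le_zero.1 (mem_monotoneTuplesLE.1 hg 0))
  simp [mzvStarTrunc, this]

lemma monotone_snoc {n : ℕ} {α : Type*} [Preorder α] {f : Fin n → α} (hf : Monotone f) {c : α}
    (hc : ∀ i, f i ≤ c) : Monotone (Fin.snoc f c : Fin (n + 1) → α) := by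
  intro i j hij
  induction j using Fin.lastCases with
  | last =>
    induction i using Fin.lastCases with
    | last => simp
    | cast i => simpa using hc i
  | cast j =>
    induction i using Fin.lastCases with
    | last => exact absurd hij (not_le.2 (Fin.castSucc_lt_last j))
    | cast i => simpa using hf (Fin.castSucc_le_castSucc_iff.1 hij)

lemma mzvStarTrunc_succ (n : ℕ) (k : Fin (n + 1) → ℕ) (M : ℕ) :
    mzvStarTrunc (n + 1) k (M + 1) = mzvStarTrunc (n + 1) k M +
      mzvStarTrunc n (fun i => k i.castSucc) (M + 1) / ((M : ℝ) + 1) ^ k (Fin.last n) := by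
  let top : {f : Fin (n + 1) → ℕ+ // Monotone f} → Prop := fun g => (g.1 (Fin.last n) : ℕ) = M + 1
  have hbelow :
      (monotoneTuplesLE (n + 1) (M + 1)).filter (¬ top ·) = monotoneTuplesLE (n + 1) M := by
    ext g
    simp only [top, mem_filter, mem_monotoneTuplesLE]
    refine ⟨fun h i => ?_, fun h => ⟨fun i => (h i).trans M.le_succ, ?_⟩⟩
    · have := (PNat.coe_le_coe _ _).2 (g.2 (Fin.le_last i))
      have := h.1 (Fin.last n)
      omega
    · have := h (Fin.last n)
      omega
  have htop : ∑ g ∈ (monotoneTuplesLE (n + 1) (M + 1)).filter top, ∏ i, (1 : ℝ) / (g.1 i : ℝ) ^ k i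
      = mzvStarTrunc n (fun i => k i.castSucc) (M + 1) / ((M : ℝ) + 1) ^ k (Fin.last n) := by
    rw [mzvStarTrunc, sum_div]
    refine sum_bij (fun g _ => ⟨Fin.init g.1, g.2.comp Fin.strictMono_castSucc.monotone⟩)
      (fun g hg => ?_) (fun g hg g' hg' h => ?_) (fun g' hg' => ?_) (fun g hg => ?_)
    · simp only [top, mem_filter, mem_monotoneTuplesLE] at hg
      exact mem_monotoneTuplesLE.2 fun i => hg.1 _
    · simp only [top, mem_filter] at hg hg'
      have hlast : g.1 (Fin.last n) = g'.1 (Fin.last n) :=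
        PNat.coe_injective (hg.2.trans hg'.2.symm)
      have hinit : Fin.init g.1 = Fin.init g'.1 := congrArg Subtype.val h
      apply Subtype.ext
      rw [← Fin.snoc_init_self g.1, ← Fin.snoc_init_self g'.1, hinit, hlast]
    · let c : ℕ+ := ⟨M + 1, M.succ_pos⟩
      have hle : ∀ i, g'.1 i ≤ c := fun i => (PNat.coe_le_coe _ _).1 (mem_monotoneTuplesLE.1 hg' i)
      let g : {f : Fin (n + 1) → ℕ+ // Monotone f} := ⟨Fin.snoc g'.1 c, monotone_snoc g'.2 hle⟩
      have hg_last : (g.1 (Fin.last n) : ℕ) = M + 1 := by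
        simp only [g, Fin.snoc_last]
        rfl
      have hg_mem : g ∈ monotoneTuplesLE (n + 1) (M + 1) := mem_monotoneTuplesLE.2 fun i => by
        induction i using Fin.lastCases with
        | last => exact hg_last.le
        | cast i => simpa [g] using mem_monotoneTuplesLE.1 hg' i
      exact ⟨g, mem_filter.2 ⟨hg_mem, hg_last⟩, Subtype.ext (by simp only [g, Fin.init_snoc])⟩
    · simp only [top, mem_filter] at hg
      have hlast : ((g.1 (Fin.last n) : ℕ) : ℝ) = M + 1 := by exact_mod_cast hg.2
      rw [Fin.prod_univ_castSucc, hlast, mul_one_div]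
      rfl
  rw [mzvStarTrunc, ← sum_filter_not_add_sum_filter _ top, hbelow, htop]
  rfl

lemma summable_pi_prod_of_nonneg {ι κ : Type*} [Fintype ι] {f : ι → κ → ℝ}
    (hf₀ : ∀ i x, 0 ≤ f i x) (hf : ∀ i, Summable (f i)) :
    Summable fun g : ι → κ => ∏ i, f i (g i) := by
  classical
  refine summable_of_sum_le (c := ∏ i, ∑' x, f i x)
    (fun g => prod_nonneg fun i _ => hf₀ i (g i)) fun u => ?_
  calc ∑ g ∈ u, ∏ i, f i (g i)
      ≤ ∑ g ∈ Fintype.piFinset fun i => u.image (· i), ∏ i, f i (g i) :=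
        sum_le_sum_of_subset_of_nonneg
          (fun g hg => Fintype.mem_piFinset.2 fun i => mem_image_of_mem _ hg)
          fun g _ _ => prod_nonneg fun i _ => hf₀ i (g i)
    _ = ∏ i, ∑ x ∈ u.image (· i), f i x := (prod_univ_sum _ _).symm
    _ ≤ ∏ i, ∑' x, f i x := Finset.prod_le_prod (fun i _ => sum_nonneg fun x _ => hf₀ i x)
          fun i _ => (hf i).sum_le_tsum _ fun x _ => hf₀ i x

lemma summable_mzvStar_terms {n : ℕ} {k : Fin n → ℕ} (hk : ∀ i, 2 ≤ k i) :
    Summable fun g : {f : Fin n → ℕ+ // Monotone f} => ∏ i, (1 : ℝ) / (g.1 i : ℝ) ^ k i := by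
  have h2 : Summable fun m : ℕ+ => (1 : ℝ) / (m : ℝ) ^ 2 :=
    (Real.summable_one_div_nat_pow.2 one_lt_two).comp_injective PNat.coe_injective
  refine .of_nonneg_of_le (fun g => by positivity) (fun g => ?_)
    ((summable_pi_prod_of_nonneg (fun _ m => by positivity) fun _ => h2).comp_injective
      Subtype.val_injective)
  refine prod_le_prod (fun i _ => by positivity) fun i _ => ?_
  exact one_div_le_one_div_of_le (by positivity)
    (pow_le_pow_right₀ (Nat.one_le_cast.2 (g.1 i).pos) (hk i))

lemma tendsto_mzvStarTrunc {n : ℕ} {k : Fin n → ℕ} (hk : ∀ i, 2 ≤ k i) :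
    Tendsto (mzvStarTrunc n k) atTop (𝓝 (mzvStar n k)) := by
  have hmono : Monotone (monotoneTuplesLE n) := fun M M' h g hg =>
    mem_monotoneTuplesLE.2 fun i => (mem_monotoneTuplesLE.1 hg i).trans h
  have hcover : ∀ g, ∃ M, g ∈ monotoneTuplesLE n M := fun g =>
    ⟨univ.sup fun i => (g.1 i : ℕ), mem_monotoneTuplesLE.2 fun i =>
      le_sup (f := fun i => (g.1 i : ℕ)) (mem_univ i)⟩
  exact (summable_mzvStar_terms hk).hasSum.comp (tendsto_atTop_finset_of_monotone hmono hcover)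

lemma mzvStarTrunc_twos (a : ℕ) {N : ℕ} (hN : 0 < N) :
    mzvStarTrunc a (fun _ => 2) N = altBinomSum (fun x => 2 / ((x : ℝ) + 1) ^ (2 * a)) N := by
  induction a generalizing N with
  | zero => simp [mzvStarTrunc_zero_length, altBinomSum_const _ hN]
  | succ a ih =>
    have h : mzvStarTrunc (a + 1) (fun _ => 2) =
        altBinomSum (fun x => 2 / ((x : ℝ) + 1) ^ (2 * (a + 1))) := by
      refine eq_altBinomSum_of_succ (mzvStarTrunc_zero _ _) fun M => ?_
      rw [mzvStarTrunc_succ, ih M.succ_pos]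
      congr 3
      funext x
      field_simp
      ring
    exact congrFun h N

/-- `(-1)^x * hstarTerm a b x` is the `x`-th term of
`-2 * zetaA (2a+2b+3) - 4 * dzetaA2 (2a+1) (2b+2)`, the outer index of the double sum shifted to
start at `0`. -/
noncomputable def hstarTerm (a b x : ℕ) : ℝ :=
  2 / ((x : ℝ) + 1) ^ (2 * a + 2 * b + 3) +
    4 / ((x : ℝ) + 1) ^ (2 * b + 2) * ∑ y ∈ range x, 1 / ((y : ℝ) + 1) ^ (2 * a + 1)

lemma mzvStarTrunc_expo232 (a b : ℕ) :
    mzvStarTrunc (a + b + 1) (expo232 a b) = altBinomSum (hstarTerm a b) := by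
  induction b with
  | zero =>
    refine eq_altBinomSum_of_succ (mzvStarTrunc_zero _ _) fun N => ?_
    rw [mzvStarTrunc_succ]
    congr 1
    have hinit : (fun i : Fin a => expo232 a 0 i.castSucc) = fun _ => 2 :=
      funext fun i => if_neg i.isLt.ne
    have hlast : expo232 a 0 (Fin.last a) = 3 := if_pos rfl
    have hterm : (fun x : ℕ => ((x : ℝ) + 1) ^ 2 * hstarTerm a 0 x) = fun x : ℕ =>
        2 * (1 / ((x : ℝ) + 1) ^ (2 * a + 1)) +
          4 * ∑ y ∈ range x, 1 / ((y : ℝ) + 1) ^ (2 * a + 1) := by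
      funext x
      simp only [hstarTerm]
      field_simp
      ring
    have hweight : (fun x : ℕ => 2 * ((x : ℝ) + 1) * (1 / ((x : ℝ) + 1) ^ (2 * a + 1))) =
        fun x : ℕ => 2 / ((x : ℝ) + 1) ^ (2 * a) := by
      funext x
      field_simp
      ring
    rw [hinit, hlast, hterm, altBinomSum_add_partialSum _ N.succ_pos, hweight,
      mzvStarTrunc_twos a N.succ_pos]
    push_cast
    field_simp
  | succ b ih =>
    refine eq_altBinomSum_of_succ (mzvStarTrunc_zero _ _) fun N => ?_
    rw [mzvStarTrunc_succ]
    congr 1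
    have hlast : expo232 a (b + 1) (Fin.last _) = 2 := if_neg (by simp)
    have hterm : (fun x : ℕ => ((x : ℝ) + 1) ^ 2 * hstarTerm a (b + 1) x) = hstarTerm a b := by
      funext x
      simp only [hstarTerm]
      field_simp
      ring
    rw [hlast, hterm, ← ih]
    rfl

lemma sum_range_one_div_le_two_sqrt (x : ℕ) : ∑ y ∈ range x, 1 / ((y : ℝ) + 1) ≤ 2 * √x := by
  induction x with
  | zero => simp
  | succ x ih =>
    rw [sum_range_succ, Nat.cast_succ]
    have hx : √((x : ℝ) + 1) ^ 2 = x + 1 := Real.sq_sqrt (by positivity)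
    have hx' : √(x : ℝ) ^ 2 = x := Real.sq_sqrt x.cast_nonneg
    have hmono : √(x : ℝ) ≤ √((x : ℝ) + 1) := Real.sqrt_le_sqrt (by linarith)
    have hstep : 1 / ((x : ℝ) + 1) ≤ 2 * √((x : ℝ) + 1) - 2 * √x := by
      rw [div_le_iff₀ (by positivity)]
      nlinarith [Real.sqrt_nonneg (x : ℝ), sq_nonneg (√((x : ℝ) + 1) - √x)]
    linarith

lemma summable_sqrt_div_sq : Summable fun x : ℕ => √((x : ℝ) + 1) / ((x : ℝ) + 1) ^ 2 := by
  have h := (summable_nat_add_iff 1).2 (Real.summable_nat_rpow.2 (by norm_num : -(3 / 2 : ℝ) < -1))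
  refine h.congr fun x => ?_
  have hx : (0 : ℝ) < x + 1 := by positivity
  rw [Nat.cast_succ, Real.sqrt_eq_rpow, ← Real.rpow_natCast, ← Real.rpow_sub hx]
  norm_num

lemma hstarTerm_nonneg (a b x : ℕ) : 0 ≤ hstarTerm a b x := by
  unfold hstarTerm
  positivity

lemma hstarTerm_le (a b x : ℕ) :
    hstarTerm a b x ≤ 10 * (√((x : ℝ) + 1) / ((x : ℝ) + 1) ^ 2) := by
  have hx : (1 : ℝ) ≤ x + 1 := by linarith [x.cast_nonneg (α := ℝ)]
  have hsqrt : 1 ≤ √((x : ℝ) + 1) := Real.one_le_sqrt.2 hx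
  have hσ : ∑ y ∈ range x, 1 / ((y : ℝ) + 1) ^ (2 * a + 1) ≤ 2 * √((x : ℝ) + 1) := by
    refine (sum_le_sum fun y _ => ?_).trans ((sum_range_one_div_le_two_sqrt x).trans ?_)
    · exact one_div_le_one_div_of_le (by positivity)
        (le_self_pow₀ (by linarith [y.cast_nonneg (α := ℝ)]) (by omega))
    · gcongr
      linarith
  have h₁ : 2 / ((x : ℝ) + 1) ^ (2 * a + 2 * b + 3) ≤ 2 * (√((x : ℝ) + 1) / ((x : ℝ) + 1) ^ 2) := by
    rw [← mul_one_div]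
    gcongr
    omega
  have h₂ : 4 / ((x : ℝ) + 1) ^ (2 * b + 2) * ∑ y ∈ range x, 1 / ((y : ℝ) + 1) ^ (2 * a + 1) ≤
      8 * (√((x : ℝ) + 1) / ((x : ℝ) + 1) ^ 2) := by
    calc _ ≤ 4 / ((x : ℝ) + 1) ^ 2 * (2 * √((x : ℝ) + 1)) := by
          gcongr
          omega
      _ = _ := by ring
  unfold hstarTerm
  linarith

lemma summable_norm_hstarTerm (a b : ℕ) : Summable fun x => ‖hstarTerm a b x‖ :=
  (summable_sqrt_div_sq.mul_left 10).of_nonneg_of_le (fun _ => norm_nonneg _) fun x => by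
    rw [Real.norm_of_nonneg (hstarTerm_nonneg a b x)]
    exact hstarTerm_le a b x

lemma zetaA_eq_tsum {k : ℕ} (hk : k ≠ 0)
    (h : Summable fun m : ℕ => (-1 : ℝ) ^ (m + 1) / ((m : ℝ) + 1) ^ k) :
    zetaA k = ∑' m : ℕ, (-1 : ℝ) ^ (m + 1) / ((m : ℝ) + 1) ^ k := by
  rw [zetaA, if_neg hk]
  exact h.hasSum.tendsto_sum_nat.limUnder_eq

lemma dzetaA2_eq_tsum {r s : ℕ} (h : Summable fun m : ℕ =>
    (-1 : ℝ) ^ (m + 2) / ((m : ℝ) + 2) ^ s * ∑ j ∈ range (m + 1), 1 / ((j : ℝ) + 1) ^ r) :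
    dzetaA2 r s = ∑' m : ℕ,
      (-1 : ℝ) ^ (m + 2) / ((m : ℝ) + 2) ^ s * ∑ j ∈ range (m + 1), 1 / ((j : ℝ) + 1) ^ r :=
  h.hasSum.tendsto_sum_nat.limUnder_eq

lemma tsum_neg_one_pow_mul_hstarTerm (a b : ℕ) :
    ∑' x, (-1) ^ x * hstarTerm a b x =
      -4 * dzetaA2 (2 * a + 1) (2 * b + 2) - 2 * zetaA (2 * a + 2 * b + 3) := by
  set z : ℕ → ℝ := fun m => (-1) ^ (m + 1) / ((m : ℝ) + 1) ^ (2 * a + 2 * b + 3)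
  set e : ℕ → ℝ := fun x => (-1) ^ x / ((x : ℝ) + 1) ^ (2 * b + 2) *
    ∑ y ∈ range x, 1 / ((y : ℝ) + 1) ^ (2 * a + 1)
  set d : ℕ → ℝ := fun m => (-1) ^ (m + 2) / ((m : ℝ) + 2) ^ (2 * b + 2) *
    ∑ j ∈ range (m + 1), 1 / ((j : ℝ) + 1) ^ (2 * a + 1)
  have hsplit : ∀ x, (-1) ^ x * hstarTerm a b x = -2 * z x + 4 * e x := fun x => by
    simp only [hstarTerm, z, e]
    ring
  have hz : Summable z := by
    have hw : 1 < 2 * a + 2 * b + 3 := by omega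
    refine (summable_nat_add_iff 1).2 (Real.summable_one_div_nat_pow.2 hw) |>.of_norm_bounded
      fun m => ?_
    simp only [z, norm_div, norm_pow, norm_neg, norm_one, one_pow,
      Real.norm_of_nonneg (by positivity : (0 : ℝ) ≤ m + 1)]
    push_cast
    exact le_rfl
  have hf : Summable fun x => (-1) ^ x * hstarTerm a b x :=
    (summable_norm_hstarTerm a b).of_norm_bounded fun x => by simp
  have he : Summable e := ((hf.add (hz.mul_left 2)).div_const 4).congr fun x => by
    rw [hsplit]
    ring
  have hshift : ∀ m, e (m + 1) = -d m := fun m => by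
    simp only [e, d]
    push_cast
    ring
  have hd : Summable d :=
    ((summable_nat_add_iff 1).2 he).neg.congr fun m => by rw [hshift, neg_neg]
  rw [zetaA_eq_tsum (by omega) hz, dzetaA2_eq_tsum hd, tsum_congr hsplit,
    (hz.mul_left _).tsum_add (he.mul_left _), tsum_mul_left, tsum_mul_left, he.tsum_eq_zero_add]
  have he0 : e 0 = 0 := by simp [e]
  rw [tsum_congr hshift, tsum_neg, he0]
  ring

theorem Hstar_eq (a b : ℕ) :
    Hstar a b = -4 * dzetaA2 (2*a+1) (2*b+2) - 2 * zetaA (2*a+2*b+3) := by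
  have hk : ∀ i, 2 ≤ expo232 a b i := fun i => by
    unfold expo232
    split <;> omega
  have hstar := tendsto_mzvStarTrunc hk
  rw [mzvStarTrunc_expo232] at hstar
  rw [← tsum_neg_one_pow_mul_hstarTerm]
  exact tendsto_nhds_unique hstar (tendsto_altBinomSum (summable_norm_hstarTerm a b))
end
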